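/- arXiv:0903.2032 — 10 statements merged into one kernel-verified Lean document; each statement's English description precedes it below -/
import Mathlib

section
/- If A and B are nilpotent n×n matrices with A + B = i·j, then for every polynomial p in two noncommuting variables, j · p(A,B) · i = 0. -/
/-!
Put `C = -A`, so that `B - C = i j`, and let `f s = j B^s i`, `g k = j C^k i`. Telescoping
`B^(s+1) - C^(s+1)` gives `F = G + X F G` for the generating functions, which are polynomials
because `B` and `C` are nilpotent. Then `(1 + X F) (1 - X G) = 1`, and as units of `K[X]` are
constant, `G = 0`. So `i` lies in the unobservable subspace `{v | ∀ k, j C^k v = 0}`. It is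
invariant under `C`, hence under `A = -C`, and, as `j` vanishes on it and `B = C + i j`, under
`B`. It therefore contains `p(A, B) i`, on which `j` vanishes.
-/

open Matrix Finset Polynomial

theorem pow_succ_sub_pow_succ_eq_sum_antidiagonal {R : Type*} [Ring R] (x y : R) (n : ℕ) :
    x ^ (n + 1) - y ^ (n + 1) = ∑ p ∈ antidiagonal n, x ^ p.1 * (x - y) * y ^ p.2 := by
  induction n with
  | zero => simp
  | succ n ih =>
    have hstep : x ^ (n + 1 + 1) - y ^ (n + 1 + 1) =
        (x - y) * y ^ (n + 1) + x * (x ^ (n + 1) - y ^ (n + 1)) := by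
      rw [pow_succ' x (n + 1), pow_succ' y (n + 1)]
      noncomm_ring
    rw [hstep, ih, Nat.sum_antidiagonal_succ, mul_sum]
    simp only [pow_succ', pow_zero, one_mul, mul_assoc]

theorem Polynomial.coeff_sum_range_monomial {R : Type*} [Semiring R] {f : ℕ → R} {S : ℕ}
    (hf : ∀ s, S ≤ s → f s = 0) (s : ℕ) :
    (∑ t ∈ range S, monomial t (f t)).coeff s = f s := by
  rw [finsetSum_coeff]
  simp only [coeff_monomial, sum_ite_eq', mem_range]
  split_ifs with hs
  · rfl
  · exact (hf s (not_lt.mp hs)).symm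

section Domain

variable {R : Type*} [CommRing R] [IsDomain R]

theorem Polynomial.eq_zero_of_eq_add_X_mul_mul {F G : R[X]} (h : F = G + X * (F * G)) :
    G = 0 := by
  have hunit : IsUnit (1 - X * G) := .of_mul_eq_one (1 + X * F) (by linear_combination X * h)
  ext k
  have hcoeff : (1 - X * G).coeff (k + 1) = 0 :=
    coeff_eq_zero_of_natDegree_lt (by rw [natDegree_eq_zero_of_isUnit hunit]; omega)
  simpa [coeff_one, coeff_X_mul] using hcoeff

theorem eq_zero_of_eq_add_sum_antidiagonal {f g : ℕ → R} {S N : ℕ}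
    (hf : ∀ s, S ≤ s → f s = 0) (hg : ∀ k, N ≤ k → g k = 0) (h₀ : f 0 = g 0)
    (h : ∀ s, f (s + 1) = g (s + 1) + ∑ p ∈ antidiagonal s, f p.1 * g p.2) (k : ℕ) :
    g k = 0 := by
  set F : R[X] := ∑ t ∈ range S, monomial t (f t)
  set G : R[X] := ∑ t ∈ range N, monomial t (g t)
  have hF : ∀ s, F.coeff s = f s := coeff_sum_range_monomial hf
  have hG : ∀ k, G.coeff k = g k := coeff_sum_range_monomial hg
  have hFG : F = G + X * (F * G) := by
    ext (_ | s)
    · rw [coeff_add, coeff_X_mul_zero, hF, hG, h₀, add_zero]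
    · rw [coeff_add, coeff_X_mul, coeff_mul, hF, hG, h s]
      simp only [hF, hG]
  rw [← hG, eq_zero_of_eq_add_X_mul_mul hFG, coeff_zero]

end Domain

namespace Matrix

variable {m R : Type*} [Fintype m] [CommRing R]

theorem dotProduct_mul_vecMulVec_mul_mulVec (M N : Matrix m m R) (i j : m → R) :
    j ⬝ᵥ ((M * vecMulVec i j * N) *ᵥ i) = (j ⬝ᵥ (M *ᵥ i)) * (j ⬝ᵥ (N *ᵥ i)) := by
  rw [mul_vecMulVec, ← mulVec_mulVec, vecMulVec_mulVec, op_smul_eq_smul, dotProduct_smul,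
    smul_eq_mul, mul_comm]

variable [DecidableEq m]

theorem dotProduct_pow_succ_mulVec_of_sub_eq_vecMulVec {B C : Matrix m m R} {i j : m → R}
    (hBC : B - C = vecMulVec i j) (s : ℕ) :
    j ⬝ᵥ (B ^ (s + 1) *ᵥ i) = j ⬝ᵥ (C ^ (s + 1) *ᵥ i) +
      ∑ p ∈ antidiagonal s, (j ⬝ᵥ (B ^ p.1 *ᵥ i)) * (j ⬝ᵥ (C ^ p.2 *ᵥ i)) := by
  rw [← sub_eq_iff_eq_add', ← dotProduct_sub, ← sub_mulVec,
    pow_succ_sub_pow_succ_eq_sum_antidiagonal, hBC, sum_mulVec, dotProduct_sum]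
  simp only [dotProduct_mul_vecMulVec_mul_mulVec]

theorem dotProduct_pow_mulVec_eq_zero_of_sub_eq_vecMulVec [IsDomain R] {B C : Matrix m m R}
    {i j : m → R} (hB : IsNilpotent B) (hC : IsNilpotent C) (hBC : B - C = vecMulVec i j)
    (k : ℕ) : j ⬝ᵥ (C ^ k *ᵥ i) = 0 := by
  obtain ⟨S, hS⟩ := hB
  obtain ⟨N, hN⟩ := hC
  refine eq_zero_of_eq_add_sum_antidiagonal (f := fun s => j ⬝ᵥ (B ^ s *ᵥ i))
    (g := fun k => j ⬝ᵥ (C ^ k *ᵥ i)) (S := S) (N := N) ?_ ?_ ?_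
    (dotProduct_pow_succ_mulVec_of_sub_eq_vecMulVec hBC) k
  · intro s hs
    rw [pow_eq_zero_of_le hs hS, zero_mulVec, dotProduct_zero]
  · intro k hk
    rw [pow_eq_zero_of_le hk hN, zero_mulVec, dotProduct_zero]
  · rw [pow_zero, pow_zero]

def unobservableSubspace (C : Matrix m m R) (j : m → R) : Submodule R (m → R) where
  carrier := {v | ∀ k, j ⬝ᵥ (C ^ k *ᵥ v) = 0}
  add_mem' hv hw k := by rw [mulVec_add, dotProduct_add, hv k, hw k, add_zero]
  zero_mem' k := by rw [mulVec_zero, dotProduct_zero]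
  smul_mem' c v hv k := by rw [mulVec_smul, dotProduct_smul, hv k, smul_zero]

variable {B C : Matrix m m R} {i j v : m → R}

theorem mem_unobservableSubspace :
    v ∈ unobservableSubspace C j ↔ ∀ k, j ⬝ᵥ (C ^ k *ᵥ v) = 0 :=
  Iff.rfl

theorem mulVec_mem_unobservableSubspace (hv : v ∈ unobservableSubspace C j) :
    C *ᵥ v ∈ unobservableSubspace C j := by
  rw [mem_unobservableSubspace] at hv ⊢
  intro k
  rw [mulVec_mulVec, ← pow_succ]
  exact hv (k + 1)

theorem mulVec_mem_unobservableSubspace_of_sub_eq_vecMulVec (hBC : B - C = vecMulVec i j)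
    (hv : v ∈ unobservableSubspace C j) : B *ᵥ v ∈ unobservableSubspace C j := by
  have hjv : j ⬝ᵥ v = 0 := by simpa using mem_unobservableSubspace.mp hv 0
  rw [sub_eq_iff_eq_add.mp hBC, add_mulVec, vecMulVec_mulVec, hjv, MulOpposite.op_zero, zero_smul,
    zero_add]
  exact mulVec_mem_unobservableSubspace hv

end Matrix

theorem FreeAlgebra.lift_mulVec_mem {ι m R : Type*} [Fintype m] [DecidableEq m] [CommRing R]
    (f : ι → Matrix m m R) {W : Submodule R (m → R)}
    (hW : ∀ a, ∀ v ∈ W, f a *ᵥ v ∈ W)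
    (p : FreeAlgebra R ι) : ∀ v ∈ W, lift R f p *ᵥ v ∈ W := by
  induction p using FreeAlgebra.induction with
  | grade0 r =>
    intro v hv
    rw [AlgHom.commutes, Algebra.algebraMap_eq_smul_one, smul_mulVec, one_mulVec]
    exact W.smul_mem r hv
  | grade1 a => simpa only [lift_ι_apply] using hW a
  | mul p q hp hq =>
    intro v hv
    rw [map_mul, ← mulVec_mulVec]
    exact hp _ (hq v hv)
  | add p q hp hq =>
    intro v hv
    rw [map_add, add_mulVec]
    exact W.add_mem (hp v hv) (hq v hv)

theorem stmt1 {n : ℕ} {K : Type*} [Field K]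
    (A B : Matrix (Fin n) (Fin n) K) (i j : Fin n → K)
    (hA : IsNilpotent A) (hB : IsNilpotent B)
    (h : A + B = Matrix.vecMulVec i j) :
    ∀ p : FreeAlgebra K (Fin 2),
      j ⬝ᵥ ((FreeAlgebra.lift K ![A, B] p) *ᵥ i) = 0 := by
  intro p
  have hBA : B - -A = vecMulVec i j := by rw [sub_neg_eq_add, add_comm, h]
  set W := unobservableSubspace (-A) j
  have hi : i ∈ W := mem_unobservableSubspace.mpr
    (dotProduct_pow_mulVec_eq_zero_of_sub_eq_vecMulVec hB hA.neg hBA)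
  have hW : ∀ a, ∀ v ∈ W, ![A, B] a *ᵥ v ∈ W := by
    intro a v hv
    fin_cases a
    · simpa [neg_mulVec] using W.neg_mem (mulVec_mem_unobservableSubspace hv)
    · exact mulVec_mem_unobservableSubspace_of_sub_eq_vecMulVec hBA hv
  simpa using mem_unobservableSubspace.mp (FreeAlgebra.lift_mulVec_mem _ hW p i hi) 0
end

section
/- If A and B are nilpotent n×n matrices with A + B = i·j, then the smallest A,B-invariant subspace containing i equals K[A]i, the cyclic K[A]-submodule generated by i; similarly j·K⟨A,B⟩ = j·K[A]. -/
/-!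
Since `B = i j - A`, the Krylov space `K[A] i`, which contains `i` and is `A`-invariant, is
also `B`-invariant. The matrices leaving a subspace invariant form a subalgebra, so `K[A] i` is
invariant under every noncommutative polynomial in `A` and `B`, hence contains `K⟨A, B⟩ i`.
The row version is the same argument for the right action.
-/

open Matrix

theorem FreeAlgebra.lift_apply_mem {R X A : Type*} [CommSemiring R] [Semiring A] [Algebra R A]
    {S : Subalgebra R A} {f : X → A} (hf : ∀ x, f x ∈ S) (p : FreeAlgebra R X) :
    FreeAlgebra.lift R f p ∈ S := by
  apply Algebra.adjoin_le (Set.range_subset_iff.2 hf)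
  rw [Algebra.adjoin_range_eq_range_freeAlgebra_lift]
  exact ⟨p, rfl⟩

namespace Matrix

variable {m R X : Type*} [Fintype m] [DecidableEq m] [CommSemiring R]

def mulVecStabilizer (W : Submodule R (m → R)) : Subalgebra R (Matrix m m R) where
  carrier := {M | ∀ w ∈ W, M *ᵥ w ∈ W}
  mul_mem' hM hN w hw := by rw [← mulVec_mulVec]; exact hM _ (hN w hw)
  add_mem' hM hN w hw := by rw [add_mulVec]; exact W.add_mem (hM w hw) (hN w hw)
  algebraMap_mem' r w hw := by
    rw [Algebra.algebraMap_eq_smul_one, smul_mulVec, one_mulVec]; exact W.smul_mem r hw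

def vecMulStabilizer (W : Submodule R (m → R)) : Subalgebra R (Matrix m m R) where
  carrier := {M | ∀ w ∈ W, w ᵥ* M ∈ W}
  mul_mem' hM hN w hw := by rw [← vecMul_vecMul]; exact hN _ (hM w hw)
  add_mem' hM hN w hw := by rw [vecMul_add]; exact W.add_mem (hM w hw) (hN w hw)
  algebraMap_mem' r w hw := by
    rw [Algebra.algebraMap_eq_smul_one, vecMul_smul, vecMul_one]; exact W.smul_mem r hw

theorem mem_mulVecStabilizer_span_range_pow_mulVec (A : Matrix m m R) (v : m → R) :
    A ∈ mulVecStabilizer (Submodule.span R (Set.range fun k : ℕ => A ^ k *ᵥ v)) := by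
  intro w hw
  induction hw using Submodule.span_induction with
  | mem x hx =>
    obtain ⟨k, rfl⟩ := hx
    exact Submodule.subset_span ⟨k + 1, by rw [mulVec_mulVec, ← pow_succ']⟩
  | zero => simp
  | add x y _ _ hx hy => rw [mulVec_add]; exact Submodule.add_mem _ hx hy
  | smul c x _ hx => rw [mulVec_smul]; exact Submodule.smul_mem _ c hx

theorem mem_vecMulStabilizer_span_range_vecMul_pow (A : Matrix m m R) (v : m → R) :
    A ∈ vecMulStabilizer (Submodule.span R (Set.range fun k : ℕ => v ᵥ* A ^ k)) := by
  intro w hw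
  induction hw using Submodule.span_induction with
  | mem x hx =>
    obtain ⟨k, rfl⟩ := hx
    exact Submodule.subset_span ⟨k + 1, by rw [vecMul_vecMul, ← pow_succ]⟩
  | zero => simp
  | add x y _ _ hx hy => rw [add_vecMul]; exact Submodule.add_mem _ hx hy
  | smul c x _ hx => rw [smul_vecMul]; exact Submodule.smul_mem _ c hx

theorem vecMulVec_mem_mulVecStabilizer {W : Submodule R (m → R)} {u : m → R} (hu : u ∈ W)
    (v : m → R) : vecMulVec u v ∈ mulVecStabilizer W := fun w _ ↦ by
  rw [vecMulVec_mulVec, op_smul_eq_smul]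
  exact W.smul_mem _ hu

theorem vecMulVec_mem_vecMulStabilizer {W : Submodule R (m → R)} (u : m → R) {v : m → R}
    (hv : v ∈ W) : vecMulVec u v ∈ vecMulStabilizer W := fun w _ ↦ by
  rw [vecMul_vecMulVec]
  exact W.smul_mem _ hv

theorem span_range_freeAlgebra_lift_mulVec_eq (f : X → Matrix m m R) (x₀ : X) (v : m → R)
    (hf : ∀ x, f x ∈
      mulVecStabilizer (Submodule.span R (Set.range fun k : ℕ => f x₀ ^ k *ᵥ v))) :
    Submodule.span R (Set.range fun p : FreeAlgebra R X => FreeAlgebra.lift R f p *ᵥ v) =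
      Submodule.span R (Set.range fun k : ℕ => f x₀ ^ k *ᵥ v) := by
  refine le_antisymm (Submodule.span_le.2 ?_) (Submodule.span_le.2 ?_)
  · rintro _ ⟨p, rfl⟩
    exact FreeAlgebra.lift_apply_mem hf p _ (Submodule.subset_span ⟨0, by simp⟩)
  · rintro _ ⟨k, rfl⟩
    exact Submodule.subset_span ⟨FreeAlgebra.ι R x₀ ^ k, by simp⟩

theorem span_range_vecMul_freeAlgebra_lift_eq (f : X → Matrix m m R) (x₀ : X) (v : m → R)
    (hf : ∀ x, f x ∈
      vecMulStabilizer (Submodule.span R (Set.range fun k : ℕ => v ᵥ* f x₀ ^ k))) :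
    Submodule.span R (Set.range fun p : FreeAlgebra R X => v ᵥ* FreeAlgebra.lift R f p) =
      Submodule.span R (Set.range fun k : ℕ => v ᵥ* f x₀ ^ k) := by
  refine le_antisymm (Submodule.span_le.2 ?_) (Submodule.span_le.2 ?_)
  · rintro _ ⟨p, rfl⟩
    exact FreeAlgebra.lift_apply_mem hf p _ (Submodule.subset_span ⟨0, by simp⟩)
  · rintro _ ⟨k, rfl⟩
    exact Submodule.subset_span ⟨FreeAlgebra.ι R x₀ ^ k, by simp⟩

theorem span_range_freeAlgebra_lift_mulVec_eq_of_add_eq_vecMulVec {R : Type*} [CommRing R]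
    {A B : Matrix m m R} {u v : m → R} (h : A + B = vecMulVec u v) :
    Submodule.span R
        (Set.range fun p : FreeAlgebra R (Fin 2) => FreeAlgebra.lift R ![A, B] p *ᵥ u) =
      Submodule.span R (Set.range fun k : ℕ => A ^ k *ᵥ u) := by
  have hu : u ∈ Submodule.span R (Set.range fun k : ℕ => A ^ k *ᵥ u) :=
    Submodule.subset_span ⟨0, by simp⟩
  have hA := mem_mulVecStabilizer_span_range_pow_mulVec A u
  refine span_range_freeAlgebra_lift_mulVec_eq _ 0 u (Fin.forall_fin_two.2 ⟨hA, ?_⟩)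
  show B ∈ _
  rw [eq_sub_of_add_eq' h]
  exact Subalgebra.sub_mem _ (vecMulVec_mem_mulVecStabilizer hu v) hA

theorem span_range_vecMul_freeAlgebra_lift_eq_of_add_eq_vecMulVec {R : Type*} [CommRing R]
    {A B : Matrix m m R} {u v : m → R} (h : A + B = vecMulVec u v) :
    Submodule.span R
        (Set.range fun p : FreeAlgebra R (Fin 2) => v ᵥ* FreeAlgebra.lift R ![A, B] p) =
      Submodule.span R (Set.range fun k : ℕ => v ᵥ* A ^ k) := by
  have hv : v ∈ Submodule.span R (Set.range fun k : ℕ => v ᵥ* A ^ k) :=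
    Submodule.subset_span ⟨0, by simp⟩
  have hA := mem_vecMulStabilizer_span_range_vecMul_pow A v
  refine span_range_vecMul_freeAlgebra_lift_eq _ 0 v (Fin.forall_fin_two.2 ⟨hA, ?_⟩)
  show B ∈ _
  rw [eq_sub_of_add_eq' h]
  exact Subalgebra.sub_mem _ (vecMulVec_mem_vecMulStabilizer u hv) hA

end Matrix

theorem stmt3_general {n : ℕ} {K : Type*} [Field K]
    (A B : Matrix (Fin n) (Fin n) K) (i j : Fin n → K)
    (h : A + B = Matrix.vecMulVec i j) :
    Submodule.span K
        (Set.range fun p : FreeAlgebra K (Fin 2) => (FreeAlgebra.lift K ![A, B] p) *ᵥ i) =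
      Submodule.span K (Set.range fun k : ℕ => (A ^ k) *ᵥ i) ∧
    Submodule.span K
        (Set.range fun p : FreeAlgebra K (Fin 2) => j ᵥ* (FreeAlgebra.lift K ![A, B] p)) =
      Submodule.span K (Set.range fun k : ℕ => j ᵥ* (A ^ k)) :=
  ⟨span_range_freeAlgebra_lift_mulVec_eq_of_add_eq_vecMulVec h,
    span_range_vecMul_freeAlgebra_lift_eq_of_add_eq_vecMulVec h⟩

theorem stmt3 {n : ℕ} {K : Type*} [Field K]
    (A B : Matrix (Fin n) (Fin n) K) (i j : Fin n → K)
    (hA : IsNilpotent A) (hB : IsNilpotent B)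
    (h : A + B = Matrix.vecMulVec i j) :
    Submodule.span K
        (Set.range fun p : FreeAlgebra K (Fin 2) => (FreeAlgebra.lift K ![A, B] p) *ᵥ i) =
      Submodule.span K (Set.range fun k : ℕ => (A ^ k) *ᵥ i) ∧
    Submodule.span K
        (Set.range fun p : FreeAlgebra K (Fin 2) => j ᵥ* (FreeAlgebra.lift K ![A, B] p)) =
      Submodule.span K (Set.range fun k : ℕ => j ᵥ* (A ^ k)) :=
  stmt3_general A B i j h
end

section
/- If A and B are nilpotent n×n matrices with A + B = i·j, then dim K[A]i + dim jK[A] ≤ n. -/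
/-!
With `B = i j - A`, both `A` and `A - i j = -B` are nilpotent, so their reversed
characteristic polynomials `det (1 - X M)` equal `1` (over a reduced ring). Since
`(1 - X A)⁻¹ = ∑ X ^ l A ^ l`, the matrix determinant lemma gives
`det (1 - X (A - i j)) = det (1 - X A) * (1 + X * ∑ (j A ^ l i) X ^ l)`,
so every `j A ^ l i` vanishes. Thus `j K[A]` is orthogonal to `K[A] i` for the dot product,
and the dimensions of two orthogonal subspaces of `K ^ n` add up to at most `n`.
-/

open Matrix Polynomial

namespace Matrix

variable {m R : Type*} [Fintype m] [DecidableEq m] [CommRing R]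

theorem charpolyRev_eq_one_of_isNilpotent [IsReduced R] {M : Matrix m m R} (hM : IsNilpotent M) :
    M.charpolyRev = 1 := by
  obtain ⟨-, hcoeff⟩ :=
    isUnit_iff_coeff_isUnit_isNilpotent.mp (isUnit_charpolyRev_of_isNilpotent hM)
  ext (_ | k)
  · simp [coeff_zero_eq_eval_zero]
  · simp [(hcoeff _ k.succ_ne_zero).eq_zero, coeff_one]

theorem det_add_vecMulVec_of_mul_eq_one {N G : Matrix m m R} (hNG : N * G = 1) (u v : m → R) :
    (N + vecMulVec u v).det = N.det * (1 + v ⬝ᵥ G *ᵥ u) := by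
  have hfactor : N + vecMulVec u v = N * (1 + vecMulVec (G *ᵥ u) v) := by
    rw [Matrix.mul_add, Matrix.mul_one, mul_vecMulVec, mulVec_mulVec, hNG, one_mulVec]
  rw [hfactor, det_mul, vecMulVec_eq Unit, det_one_add_replicateCol_mul_replicateRow]

theorem charpolyRev_sub_vecMulVec {A : Matrix m m R} {k : ℕ} (hk : A ^ k = 0) (i j : m → R) :
    (A - vecMulVec i j).charpolyRev =
      A.charpolyRev * (1 + X * ∑ l ∈ Finset.range k, C (j ⬝ᵥ A ^ l *ᵥ i) * X ^ l) := by
  set G := ∑ l ∈ Finset.range k, ((X : R[X]) • A.map C) ^ l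
  have hNG : (1 - (X : R[X]) • A.map C) * G = 1 := by
    rw [mul_neg_geom_sum, _root_.smul_pow, ← C.mapMatrix_apply, ← map_pow, hk, map_zero,
      smul_zero, sub_zero]
  have hsplit : 1 - (X : R[X]) • (A - vecMulVec i j).map C =
      1 - (X : R[X]) • A.map C + vecMulVec ((X : R[X]) • (C ∘ i)) (C ∘ j) := by
    ext a b : 1
    simp [vecMulVec_apply]
    ring
  rw [charpolyRev, hsplit, det_add_vecMulVec_of_mul_eq_one hNG, ← charpolyRev]
  congr 2
  rw [mulVec_smul, dotProduct_smul, smul_eq_mul, sum_mulVec, dotProduct_sum]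
  congr 1
  refine Finset.sum_congr rfl fun l _ => ?_
  rw [_root_.smul_pow, ← C.mapMatrix_apply, ← map_pow, smul_mulVec, dotProduct_smul,
    smul_eq_mul, mul_comm, RingHom.map_dotProduct]
  congr 2
  ext a : 1
  exact (RingHom.map_mulVec (C : R →+* R[X]) _ _ _).symm

theorem dotProduct_pow_mulVec_eq_zero [IsReduced R] {A B : Matrix m m R} {i j : m → R}
    (hA : IsNilpotent A) (hB : IsNilpotent B) (h : A + B = vecMulVec i j) (l : ℕ) :
    j ⬝ᵥ A ^ l *ᵥ i = 0 := by
  obtain ⟨k, hk⟩ := hA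
  have hrev := charpolyRev_sub_vecMulVec hk i j
  rw [← h, sub_add_cancel_left, charpolyRev_eq_one_of_isNilpotent hB.neg,
    charpolyRev_eq_one_of_isNilpotent ⟨k, hk⟩, one_mul, left_eq_add] at hrev
  have hcoeff := congr_arg (coeff · (l + 1)) hrev
  simp only [coeff_X_mul, finsetSum_coeff, coeff_C_mul_X_pow, Finset.sum_ite_eq, Finset.mem_range,
    coeff_zero] at hcoeff
  by_cases hl : l < k
  · rwa [if_pos hl] at hcoeff
  · rw [pow_eq_zero_of_le (not_lt.mp hl) hk, zero_mulVec, dotProduct_zero]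

end Matrix

theorem finrank_span_add_finrank_span_le_of_dotProduct_eq_zero {ι K : Type*} [Fintype ι] [Field K]
    {s t : Set (ι → K)} (h : ∀ v ∈ s, ∀ w ∈ t, w ⬝ᵥ v = 0) :
    Module.finrank K (Submodule.span K s) + Module.finrank K (Submodule.span K t) ≤
      Fintype.card ι := by
  classical
  let e : (ι → K) →ₗ[K] Module.Dual K (ι → K) := dotProductEquiv K ι
  have hmap : (Submodule.span K t).map e ≤ (Submodule.span K s).dualAnnihilator := by
    rw [Submodule.map_span, Submodule.span_le]
    rintro _ ⟨w, hw, rfl⟩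
    exact (Submodule.mem_dualAnnihilator _).2 fun v hv =>
      (Submodule.span_le (p := LinearMap.ker (e w))).2 (fun u hu => h u hu w hw) hv
  calc Module.finrank K (Submodule.span K s) + Module.finrank K (Submodule.span K t)
      = Module.finrank K (Submodule.span K s) + Module.finrank K ((Submodule.span K t).map e) := by
        rw [LinearEquiv.finrank_map_eq]
    _ ≤ Module.finrank K (Submodule.span K s) +
          Module.finrank K (Submodule.span K s).dualAnnihilator := by
        gcongr
        exact Submodule.finrank_mono hmap
    _ = Fintype.card ι := by
        rw [Subspace.finrank_add_finrank_dualAnnihilator_eq, Module.finrank_fintype_fun_eq_card]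

theorem stmt4 {n : ℕ} {K : Type*} [Field K]
    (A B : Matrix (Fin n) (Fin n) K) (i j : Fin n → K)
    (hA : IsNilpotent A) (hB : IsNilpotent B)
    (h : A + B = Matrix.vecMulVec i j) :
    Module.finrank K (Submodule.span K (Set.range fun k : ℕ => (A ^ k) *ᵥ i)) +
      Module.finrank K (Submodule.span K (Set.range fun k : ℕ => j ᵥ* (A ^ k))) ≤ n := by
  have horth : ∀ v ∈ Set.range fun k : ℕ => (A ^ k) *ᵥ i,
      ∀ w ∈ Set.range fun k : ℕ => j ᵥ* (A ^ k), w ⬝ᵥ v = 0 := by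
    rintro _ ⟨l, rfl⟩ _ ⟨k, rfl⟩
    rw [← dotProduct_mulVec, mulVec_mulVec, ← pow_add]
    exact dotProduct_pow_mulVec_eq_zero hA hB h (k + l)
  simpa using finrank_span_add_finrank_span_le_of_dotProduct_eq_zero horth
end

section
/- Let X, Y be n×n matrices with [X,Y] = −i·j for a column vector i and row vector j (i.e., [X,Y] + ij = 0). Then for all noncommutative polynomials p, q in two variables, j·p(X,Y)·q(X,Y)·i = 0. -/
/-!
Over an algebraically closed field, induct on `dim V`. Choose an eigenvalue `μ` of `X`; then
`X₀ = X - μ` satisfies the same equation and has a nonzero kernel. If `i ∈ range X₀`, the identity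
`Y X₀ = X₀ Y + i j` makes `range X₀` a proper subspace stable under `X` and `Y` and containing `i`,
so we may restrict to it. Otherwise `X₀ Y v = -j(v) i` forces `j` to vanish on `ker X₀`, which is
then stable under `X` and `Y`, and we pass to `V ⧸ ker X₀`. A general field is handled by
extending scalars to its algebraic closure.
-/

open Matrix Module LinearMap

theorem FreeAlgebra.lift_apply_apply_of_intertwine {R ι V W : Type*} [CommSemiring R]
    [AddCommMonoid V] [Module R V] [AddCommMonoid W] [Module R W] (f : V →ₗ[R] W)
    {T : ι → End R V} {T' : ι → End R W} (h : ∀ k v, f (T k v) = T' k (f v))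
    (p : FreeAlgebra R ι) (v : V) : f (lift R T p v) = lift R T' p (f v) := by
  induction p using FreeAlgebra.induction generalizing v with
  | grade0 r => simp [Module.algebraMap_end_apply]
  | grade1 k => simp [h]
  | mul a b ha hb => simp [Module.End.mul_apply, ha, hb]
  | add a b ha hb => simp [ha, hb]

theorem AlgHom.apply_freeAlgebraLift {R S A B ι : Type*} [CommSemiring R] [CommSemiring S]
    [Algebra R S] [Semiring A] [Algebra R A] [Semiring B] [Algebra R B] [Algebra S B]
    [IsScalarTower R S B] (g : A →ₐ[R] B) (T : ι → A) (r : FreeAlgebra R ι) :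
    g (FreeAlgebra.lift R T r) =
      FreeAlgebra.lift S (g ∘ T) (FreeAlgebra.lift R (FreeAlgebra.ι S) r) := by
  have : g.comp (FreeAlgebra.lift R T) =
      ((FreeAlgebra.lift S (g ∘ T)).restrictScalars R).comp (FreeAlgebra.lift R (FreeAlgebra.ι S)) :=
    FreeAlgebra.hom_ext (by ext; simp)
  exact DFunLike.congr_fun this r

section

variable {F V : Type*} [Field F] [AddCommGroup V] [Module F V]

/-- The moment map equation `[X, Y] + i j = 0`. -/
def MomentMapEqZero (X Y : End F V) (i : V) (j : Dual F V) : Prop :=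
  ∀ v, X (Y v) - Y (X v) + j v • i = 0

variable {X Y : End F V} {i : V} {j : Dual F V}

namespace MomentMapEqZero

lemma sub_smul_one (hc : MomentMapEqZero X Y i j) (μ : F) :
    MomentMapEqZero (X - μ • 1) Y i j := fun v => by
  simpa [map_sub, map_smul] using hc v

lemma mapsTo_range (hc : MomentMapEqZero X Y i j) (hi : i ∈ range X) :
    ∀ v ∈ range X, Y v ∈ range X := by
  rintro _ ⟨u, rfl⟩
  rw [show Y (X u) = X (Y u) + j u • i by linear_combination (norm := module) -(hc u)]
  exact add_mem (mem_range_self X _) (Submodule.smul_mem _ _ hi)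

lemma ker_le_ker (hc : MomentMapEqZero X Y i j) (hi : i ∉ range X) : ker X ≤ ker j := by
  intro v hv
  by_contra hjv
  refine hi ⟨-(j v)⁻¹ • Y v, ?_⟩
  have : X (Y v) = -(j v • i) := by
    have := hc v
    rw [LinearMap.mem_ker.mp hv, map_zero, sub_zero] at this
    exact eq_neg_of_add_eq_zero_left this
  rw [map_smul, this, smul_neg, neg_smul, neg_neg, smul_smul, inv_mul_cancel₀ hjv, one_smul]

lemma mapsTo_ker (hc : MomentMapEqZero X Y i j) (hj : ker X ≤ ker j) :
    ∀ v ∈ ker X, Y v ∈ ker X := by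
  intro v hv
  have := hc v
  rwa [LinearMap.mem_ker.mp hv, map_zero, sub_zero, LinearMap.mem_ker.mp (hj hv), zero_smul,
    add_zero] at this

lemma restrict (hc : MomentMapEqZero X Y i j) {M : Submodule F V} (hX : ∀ v ∈ M, X v ∈ M)
    (hY : ∀ v ∈ M, Y v ∈ M) (hi : i ∈ M) :
    MomentMapEqZero (X.restrict hX) (Y.restrict hY) ⟨i, hi⟩ (j ∘ₗ M.subtype) := fun v =>
  Subtype.ext (hc v)

lemma mapQ (hc : MomentMapEqZero X Y i j) {N : Submodule F V} (hX : N ≤ N.comap X)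
    (hY : N ≤ N.comap Y) (hj : N ≤ ker j) :
    MomentMapEqZero (N.mapQ N X hX) (N.mapQ N Y hY) (N.mkQ i) (N.liftQ j hj) := by
  intro v
  induction v using Submodule.Quotient.induction_on with
  | _ v => simpa using congrArg N.mkQ (hc v)

end MomentMapEqZero

lemma apply_lift_apply_eq_zero_of_restrict {M : Submodule F V} (hX : ∀ v ∈ M, X v ∈ M)
    (hY : ∀ v ∈ M, Y v ∈ M) (hi : i ∈ M)
    (h : ∀ p : FreeAlgebra F (Fin 2),
      (j ∘ₗ M.subtype) (FreeAlgebra.lift F ![X.restrict hX, Y.restrict hY] p ⟨i, hi⟩) = 0)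
    (p : FreeAlgebra F (Fin 2)) : j (FreeAlgebra.lift F ![X, Y] p i) = 0 := by
  rw [← h p, LinearMap.comp_apply,
    FreeAlgebra.lift_apply_apply_of_intertwine M.subtype (T' := ![X, Y])]
  · rfl
  · intro k v; fin_cases k <;> rfl

lemma apply_lift_apply_eq_zero_of_mapQ {N : Submodule F V} (hX : N ≤ N.comap X)
    (hY : N ≤ N.comap Y) (hj : N ≤ ker j)
    (h : ∀ p : FreeAlgebra F (Fin 2),
      N.liftQ j hj (FreeAlgebra.lift F ![N.mapQ N X hX, N.mapQ N Y hY] p (N.mkQ i)) = 0)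
    (p : FreeAlgebra F (Fin 2)) : j (FreeAlgebra.lift F ![X, Y] p i) = 0 := by
  rw [← h p, ← FreeAlgebra.lift_apply_apply_of_intertwine N.mkQ (T := ![X, Y])]
  · rfl
  · intro k v; fin_cases k <;> rfl

theorem MomentMapEqZero.apply_lift_apply_eq_zero [IsAlgClosed F] [FiniteDimensional F V]
    (hc : MomentMapEqZero X Y i j) (p : FreeAlgebra F (Fin 2)) :
    j (FreeAlgebra.lift F ![X, Y] p i) = 0 := by
  induction hd : finrank F V using Nat.strong_induction_on generalizing V p with
  | _ d ih =>
  rcases subsingleton_or_nontrivial V with hV | hV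
  · rw [Subsingleton.elim (FreeAlgebra.lift F ![X, Y] p i) 0, map_zero]
  obtain ⟨μ, hμ⟩ := X.exists_eigenvalue
  set X₀ := X - μ • 1
  have hc₀ := hc.sub_smul_one μ
  have hker : ker X₀ ≠ ⊥ := by
    rwa [Module.End.hasEigenvalue_iff, Module.End.eigenspace_def] at hμ
  have hX (M : Submodule F V) (hM : ∀ v ∈ M, X₀ v ∈ M) : ∀ v ∈ M, X v ∈ M := fun v hv => by
    simpa [X₀] using add_mem (hM v hv) (M.smul_mem μ hv)
  by_cases hi : i ∈ range X₀
  · have hlt : finrank F (range X₀) < d :=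
      hd ▸ Submodule.finrank_lt (mt ker_eq_bot_iff_range_eq_top.mpr hker)
    have hXM := hX _ fun v _ => mem_range_self X₀ v
    have hYM := hc₀.mapsTo_range hi
    exact apply_lift_apply_eq_zero_of_restrict hXM hYM hi
      (fun q => ih _ hlt (hc.restrict hXM hYM hi) q rfl) p
  · have hj := hc₀.ker_le_ker hi
    have hlt : finrank F (V ⧸ ker X₀) < d := by
      have := (ker X₀).finrank_quotient_add_finrank
      have := Submodule.finrank_eq_zero.not.mpr hker
      omega
    have hXN := hX (ker X₀) fun v hv => by simp [LinearMap.mem_ker.mp hv]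
    have hYN := hc₀.mapsTo_ker hj
    exact apply_lift_apply_eq_zero_of_mapQ hXN hYN hj
      (fun q => ih _ hlt (hc.mapQ hXN hYN hj) q rfl) p

end

theorem Matrix.dotProduct_lift_mulVec_eq_zero {K n : Type*} [Field K] [Fintype n] [DecidableEq n]
    {X Y : Matrix n n K} {i j : n → K} (hc : X * Y - Y * X + vecMulVec i j = 0)
    (p : FreeAlgebra K (Fin 2)) : j ⬝ᵥ (FreeAlgebra.lift K ![X, Y] p *ᵥ i) = 0 := by
  let L := AlgebraicClosure K
  let φ := algebraMap K L
  let g : Matrix n n K →ₐ[K] End L (n → L) :=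
    (toLinAlgEquiv'.toAlgHom.restrictScalars K).comp (AlgHom.mapMatrix (Algebra.ofId K L))
  have hg (M : Matrix n n K) (v : n → L) : g M v = M.map φ *ᵥ v := rfl
  have hcL : MomentMapEqZero (g X) (g Y) (φ ∘ i) (dotProductEquiv L n (φ ∘ j)) := fun v => by
    have hφ : (vecMulVec i j).map φ = vecMulVec (φ ∘ i) (φ ∘ j) := by
      ext; simp [vecMulVec_apply]
    have := congrArg (fun M => g M v) hc
    simp only [map_add, map_sub, map_mul, LinearMap.add_apply, LinearMap.sub_apply,
      Module.End.mul_apply, hg, hφ, dotProductEquiv_apply_apply] at this ⊢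
    rwa [vecMulVec_mulVec, op_smul_eq_smul, Matrix.map_zero _ (map_zero φ), zero_mulVec] at this
  have key := hcL.apply_lift_apply_eq_zero (FreeAlgebra.lift K (FreeAlgebra.ι L) p)
  rw [show ![g X, g Y] = g ∘ ![X, Y] by ext k : 1; fin_cases k <;> rfl,
    ← g.apply_freeAlgebraLift, hg] at key
  apply φ.injective
  rw [map_zero, RingHom.map_dotProduct, ← key, dotProductEquiv_apply_apply]
  congr 1
  funext r
  exact RingHom.map_mulVec φ _ i r

theorem stmt5 {n : ℕ} {K : Type*} [Field K]
    (X Y : Matrix (Fin n) (Fin n) K) (i j : Fin n → K)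
    (hc : X * Y - Y * X + Matrix.vecMulVec i j = 0) :
    ∀ p q : FreeAlgebra K (Fin 2),
      j ⬝ᵥ ((FreeAlgebra.lift K ![X, Y] p * FreeAlgebra.lift K ![X, Y] q) *ᵥ i) = 0 := by
  intro p q
  rw [← map_mul]
  exact dotProduct_lift_mulVec_eq_zero hc (p * q)
end

section
/- Let X, Y be n×n matrices with [X,Y] + ij = 0. Then the perpendicular complement W = (jK⟨X,Y⟩)^⊥ = {v ∈ K^n : u·v = 0 for all u ∈ jK⟨X,Y⟩} is invariant under X and Y, and moreover the restrictions of X and Y to W commute: [X,Y] acts as zero on W. -/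
/-! The annihilator of `j K⟨X, Y⟩` is stable under `X` and `Y` because `j K⟨X, Y⟩` is stable under
right multiplication by them: `(j p) ⬝ᵥ (X v) = (j (p X)) ⬝ᵥ v`. On it `[X, Y] = -i j` acts as zero,
since `j` itself lies in `j K⟨X, Y⟩`. -/

open Matrix

section

variable {m ι R : Type*} [Fintype m] [DecidableEq m] [CommSemiring R]

theorem dotProduct_vecMul_lift_mulVec_ι (f : ι → Matrix m m R) (j v : m → R)
    (hv : ∀ p : FreeAlgebra R ι, (j ᵥ* FreeAlgebra.lift R f p) ⬝ᵥ v = 0) (k : ι)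
    (p : FreeAlgebra R ι) : (j ᵥ* FreeAlgebra.lift R f p) ⬝ᵥ (f k *ᵥ v) = 0 := by
  simpa [dotProduct_mulVec, vecMul_vecMul] using hv (p * FreeAlgebra.ι R k)

theorem dotProduct_eq_zero_of_forall_lift (f : ι → Matrix m m R) (j v : m → R)
    (hv : ∀ p : FreeAlgebra R ι, (j ᵥ* FreeAlgebra.lift R f p) ⬝ᵥ v = 0) : j ⬝ᵥ v = 0 := by
  simpa using hv 1

end

theorem mulVec_comm_of_commutator_add_vecMulVec_eq_zero {m R : Type*} [Fintype m] [CommRing R]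
    {X Y : Matrix m m R} {i j : m → R} (hc : X * Y - Y * X + vecMulVec i j = 0) {v : m → R}
    (hv : j ⬝ᵥ v = 0) : X *ᵥ (Y *ᵥ v) = Y *ᵥ (X *ᵥ v) := by
  have h := congrArg (· *ᵥ v) hc
  simp only [add_mulVec, sub_mulVec, vecMulVec_mulVec, hv, MulOpposite.op_zero, zero_smul,
    add_zero, zero_mulVec, sub_eq_zero, ← mulVec_mulVec] at h
  exact h

theorem stmt7 {n : ℕ} {K : Type*} [Field K]
    (X Y : Matrix (Fin n) (Fin n) K) (i j : Fin n → K)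
    (hc : X * Y - Y * X + Matrix.vecMulVec i j = 0) :
    ∀ v : Fin n → K,
      (∀ p : FreeAlgebra K (Fin 2), (j ᵥ* (FreeAlgebra.lift K ![X, Y] p)) ⬝ᵥ v = 0) →
      (∀ p : FreeAlgebra K (Fin 2), (j ᵥ* (FreeAlgebra.lift K ![X, Y] p)) ⬝ᵥ (X *ᵥ v) = 0) ∧
      (∀ p : FreeAlgebra K (Fin 2), (j ᵥ* (FreeAlgebra.lift K ![X, Y] p)) ⬝ᵥ (Y *ᵥ v) = 0) ∧
      X *ᵥ (Y *ᵥ v) = Y *ᵥ (X *ᵥ v) := fun v hv =>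
  ⟨dotProduct_vecMul_lift_mulVec_ι ![X, Y] j v hv 0,
    dotProduct_vecMul_lift_mulVec_ι ![X, Y] j v hv 1,
    mulVec_comm_of_commutator_add_vecMulVec_eq_zero hc
      (dotProduct_eq_zero_of_forall_lift ![X, Y] j v hv)⟩
end

section
/- Let X, Y be nilpotent n×n matrices with [X,Y] + ij = 0. Fix the lex-deg monomial order on K[x,y] (graded, with x < y in each degree) and define the 'staircase' set λ of exponent pairs (a,b) such that X^a Y^b i is not a linear combination of {X^c Y^d i : x^a y^b < x^c y^d}. Then λ is a Young diagram: if (a,b) ∈ λ and 0 ≤ a' ≤ a, 0 ≤ b' ≤ b, then (a',b') ∈ λ. -/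
open Matrix

/-- The graded lexicographic order on monomials `x^a y^b`, with
`1 < x < y < x² < xy < y² < …`. -/
def lexdegLt (p q : ℕ × ℕ) : Prop :=
  p.1 + p.2 < q.1 + q.2 ∨ (p.1 + p.2 = q.1 + q.2 ∧ p.2 < q.2)

/-- `(a,b)` belongs to the staircase `λ`: `X^a Y^b i` is not a linear combination
of the vectors `X^c Y^d i` for strictly larger monomials `x^c y^d`. -/
def inStaircase {n : ℕ} {K : Type*} [Field K]
    (X Y : Matrix (Fin n) (Fin n) K) (i : Fin n → K) (a b : ℕ) : Prop :=
  (X ^ a * Y ^ b) *ᵥ i ∉ Submodule.span K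
    {v : Fin n → K | ∃ c d : ℕ, lexdegLt (a, b) (c, d) ∧ v = (X ^ c * Y ^ d) *ᵥ i}

/-!
Over `R[s][t]` the matrices `U = 1 - sX` and `V = 1 - tY` are invertible by nilpotency, and
`UV - VU = st(XY - YX) = -st·ijᵀ`. Hence `UVU⁻¹V⁻¹ = 1 - st·i (jᵀU⁻¹V⁻¹)` has determinant `1`,
which by the matrix determinant lemma forces `j U⁻¹V⁻¹ i = Σ sᵃtᵇ · j Xᵃ Yᵇ i` to vanish:
`j Xᵃ Yᵇ i = 0` for all `a, b`. Then `ij` kills every `Xᶜ Yᵈ i`, so `Y Xᶜ Yᵈ i = Xᶜ Yᵈ⁺¹ i`,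
and multiplying by `Xᵉ Yᵉ'` sends `Xᶜ Yᵈ i` to `Xᶜ⁺ᵉ Yᵈ⁺ᵉ' i`. As the monomial order is
translation invariant, a linear relation of `Xᵃ' Yᵇ' i` with larger monomials is carried to one of
`Xᵃ Yᵇ i`, so the complement of the staircase is an upper set.
-/

open Finset
open scoped Polynomial

section CommRing

variable {R : Type*} [CommRing R]

theorem Polynomial.coeff_coeff_C_X_mul_X_mul_sum_sum (c : ℕ → ℕ → R) {p q a b : ℕ}
    (ha : a < p) (hb : b < q) :
    ((C X * X * ∑ k ∈ range p, ∑ l ∈ range q,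
      (C X : R[X][X]) ^ k * X ^ l * C (C (c k l))).coeff (b + 1)).coeff (a + 1) = c a b := by
  have hterm (k l : ℕ) (r : R) : ((C X : R[X][X]) ^ k * X ^ l * C (C r)).coeff b
      = if b = l then (X ^ k * C r : R[X]) else 0 := by
    rw [mul_right_comm, ← C_pow, ← C_mul, coeff_C_mul_X_pow]
  rw [mul_assoc, coeff_C_mul, coeff_X_mul, coeff_X_mul]
  simp only [finsetSum_coeff, hterm, sum_ite_eq, mem_range, hb, if_true]
  simp [ha]

namespace Matrix

variable {ι : Type*} [Fintype ι] [DecidableEq ι]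

theorem commutator_one_sub_smul_one_sub_smul (s t : R) (X Y : Matrix ι ι R) :
    (1 - s • X) * (1 - t • Y) - (1 - t • Y) * (1 - s • X) = (s * t) • (X * Y - Y * X) := by
  simp only [sub_mul, mul_sub, one_mul, mul_one, smul_mul_smul, smul_sub, mul_comm t s]
  abel

theorem det_one_sub_vecMulVec (u v : ι → R) : det (1 - vecMulVec u v) = 1 - v ⬝ᵥ u := by
  rw [sub_eq_add_neg, ← neg_vecMulVec, vecMulVec_eq (Fin 1),
    det_one_add_replicateCol_mul_replicateRow, dotProduct_neg, ← sub_eq_add_neg]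

theorem dotProduct_mulVec_eq_zero_of_commutator_add_vecMulVec_eq_zero
    {U U' V V' : Matrix ι ι R} {u v : ι → R} (hU : U * U' = 1) (hV : V * V' = 1)
    (h : U * V - V * U + vecMulVec u v = 0) : v ⬝ᵥ (U' * V') *ᵥ u = 0 := by
  have hconj : U * V * (U' * V') = 1 - vecMulVec u (v ᵥ* (U' * V')) := by
    have hVU : V * U * (U' * V') = 1 := by
      rw [mul_assoc, ← mul_assoc U, hU, one_mul, hV]
    have hUV : U * V = V * U - vecMulVec u v := by rw [← sub_eq_zero, ← h]; abel
    rw [hUV, sub_mul, hVU, vecMulVec_mul]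
  have hdet : det (U * V * (U' * V')) = 1 := by
    have hU' := congrArg det hU
    have hV' := congrArg det hV
    simp only [det_mul, det_one] at hU' hV' ⊢
    linear_combination V.det * V'.det * hU' + hV'
  rw [hconj, det_one_sub_vecMulVec, sub_eq_self] at hdet
  rwa [dotProduct_mulVec]

theorem dotProduct_geom_sum_mul_geom_sum_mulVec_map {A : Type*} [CommRing A]
    (φ : R →+* A) (s t : A) (X Y : Matrix ι ι R) (i j : ι → R) (p q : ℕ) :
    (φ ∘ j) ⬝ᵥ ((∑ k ∈ range p, (s • X.map φ) ^ k) * ∑ l ∈ range q, (t • Y.map φ) ^ l) *ᵥ (φ ∘ i)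
      = ∑ k ∈ range p, ∑ l ∈ range q, s ^ k * t ^ l * φ (j ⬝ᵥ (X ^ k * Y ^ l) *ᵥ i) := by
  have hterm (k l : ℕ) : (s • X.map φ) ^ k * (t • Y.map φ) ^ l
      = (s ^ k * t ^ l) • (X ^ k * Y ^ l).map φ := by
    rw [smul_pow, smul_pow, smul_mul_smul, Matrix.map_mul, Matrix.map_pow, Matrix.map_pow]
  have hmap (M : Matrix ι ι R) : φ ∘ (M *ᵥ i) = M.map φ *ᵥ (φ ∘ i) :=
    funext (RingHom.map_mulVec φ M i)
  simp only [sum_mul_sum, sum_mulVec, dotProduct_sum, hterm, smul_mulVec, dotProduct_smul,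
    ← hmap, ← RingHom.map_dotProduct, smul_eq_mul]

theorem dotProduct_pow_mul_pow_mulVec_eq_zero {X Y : Matrix ι ι R} {i j : ι → R}
    (hX : IsNilpotent X) (hY : IsNilpotent Y) (hc : X * Y - Y * X + vecMulVec i j = 0)
    (a b : ℕ) : j ⬝ᵥ (X ^ a * Y ^ b) *ᵥ i = 0 := by
  obtain ⟨p, hp⟩ := hX
  obtain ⟨q, hq⟩ := hY
  rcases le_or_gt p a with ha | ha
  · simp [pow_eq_zero_of_le ha hp]
  rcases le_or_gt q b with hb | hb
  · simp [pow_eq_zero_of_le hb hq]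
  let φ : R →+* R[X][X] := Polynomial.C.comp Polynomial.C
  let s : R[X][X] := Polynomial.C Polynomial.X
  let t : R[X][X] := Polynomial.X
  have hU : (1 - s • X.map φ) * ∑ k ∈ range p, (s • X.map φ) ^ k = 1 := by
    rw [mul_neg_geom_sum, smul_pow, ← Matrix.map_pow, hp, Matrix.map_zero _ (map_zero φ),
      smul_zero, sub_zero]
  have hV : (1 - t • Y.map φ) * ∑ l ∈ range q, (t • Y.map φ) ^ l = 1 := by
    rw [mul_neg_geom_sum, smul_pow, ← Matrix.map_pow, hq, Matrix.map_zero _ (map_zero φ),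
      smul_zero, sub_zero]
  have hvecMulVec : vecMulVec (φ ∘ i) (φ ∘ j) = φ.mapMatrix (vecMulVec i j) := by
    ext
    simp [vecMulVec_apply]
  have hUV : (1 - s • X.map φ) * (1 - t • Y.map φ) - (1 - t • Y.map φ) * (1 - s • X.map φ)
      + vecMulVec ((s * t) • (φ ∘ i)) (φ ∘ j) = 0 := by
    rw [commutator_one_sub_smul_one_sub_smul, smul_vecMulVec, ← smul_add, hvecMulVec]
    simp only [← RingHom.mapMatrix_apply, ← map_mul, ← map_sub, ← map_add, hc, map_zero,
      smul_zero]
  have hG := dotProduct_mulVec_eq_zero_of_commutator_add_vecMulVec_eq_zero hU hV hUV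
  rw [mulVec_smul, dotProduct_smul, dotProduct_geom_sum_mul_geom_sum_mulVec_map,
    smul_eq_mul] at hG
  -- `hG` reads `s t · G = 0` with `G = Σ sᵏ tˡ · j Xᵏ Yˡ i`; the factor `s t` shifts coefficients.
  have hcoeff := congrArg (fun G : R[X][X] => (G.coeff (b + 1)).coeff (a + 1)) hG
  simp only [Polynomial.coeff_zero] at hcoeff
  exact (Polynomial.coeff_coeff_C_X_mul_X_mul_sum_sum
    (fun k l => j ⬝ᵥ (X ^ k * Y ^ l) *ᵥ i) ha hb).symm.trans hcoeff

theorem mulVec_pow_mul_pow_mulVec {X Y : Matrix ι ι R} {i j : ι → R}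
    (hc : X * Y - Y * X + vecMulVec i j = 0) (hj : ∀ a b : ℕ, j ⬝ᵥ (X ^ a * Y ^ b) *ᵥ i = 0)
    (c d : ℕ) : Y *ᵥ (X ^ c * Y ^ d) *ᵥ i = (X ^ c * Y ^ (d + 1)) *ᵥ i := by
  have hYX : Y * X = X * Y + vecMulVec i j := by rw [← sub_eq_zero, ← neg_eq_zero, ← hc]; abel
  induction c with
  | zero => rw [pow_zero, one_mul, one_mul, mulVec_mulVec, ← pow_succ']
  | succ c ih =>
    calc Y *ᵥ (X ^ (c + 1) * Y ^ d) *ᵥ i = (Y * X) *ᵥ (X ^ c * Y ^ d) *ᵥ i := by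
          rw [pow_succ', mul_assoc, mulVec_mulVec, mulVec_mulVec, mul_assoc]
      _ = X *ᵥ Y *ᵥ (X ^ c * Y ^ d) *ᵥ i := by
          rw [hYX, add_mulVec, vecMulVec_mulVec, hj, MulOpposite.op_zero, zero_smul, add_zero,
            ← mulVec_mulVec]
      _ = (X ^ (c + 1) * Y ^ (d + 1)) *ᵥ i := by
          rw [ih, mulVec_mulVec, ← mul_assoc, ← pow_succ']

theorem pow_mul_pow_mulVec_pow_mul_pow_mulVec {X Y : Matrix ι ι R} {i j : ι → R}
    (hc : X * Y - Y * X + vecMulVec i j = 0) (hj : ∀ a b : ℕ, j ⬝ᵥ (X ^ a * Y ^ b) *ᵥ i = 0)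
    (e e' c d : ℕ) :
    (X ^ e * Y ^ e') *ᵥ (X ^ c * Y ^ d) *ᵥ i = (X ^ (c + e) * Y ^ (d + e')) *ᵥ i := by
  induction e' generalizing d with
  | zero => rw [pow_zero, mul_one, mulVec_mulVec, ← mul_assoc, ← pow_add, add_comm e, add_zero]
  | succ e' ih =>
    rw [pow_succ, ← mul_assoc, ← mulVec_mulVec, mulVec_pow_mul_pow_mulVec hc hj, ih, add_assoc,
      add_comm 1]

end Matrix

end CommRing

theorem lexdegLt_add {a b c d : ℕ} (e e' : ℕ) (h : lexdegLt (a, b) (c, d)) :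
    lexdegLt (a + e, b + e') (c + e, d + e') := by
  unfold lexdegLt at *
  omega

theorem mem_span_lexdegLt_of_map {K V : Type*} [Semiring K] [AddCommMonoid V] [Module K V]
    (g : ℕ → ℕ → V) (f : V →ₗ[K] V) {e e' : ℕ} (hf : ∀ c d, f (g c d) = g (c + e) (d + e'))
    {a b : ℕ} (h : g a b ∈ Submodule.span K {v | ∃ c d, lexdegLt (a, b) (c, d) ∧ v = g c d}) :
    g (a + e) (b + e') ∈
      Submodule.span K {v | ∃ c d, lexdegLt (a + e, b + e') (c, d) ∧ v = g c d} := by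
  rw [← hf]
  refine Submodule.span_mono ?_ (Submodule.apply_mem_span_image_of_mem_span f h)
  rintro _ ⟨_, ⟨c, d, hcd, rfl⟩, rfl⟩
  exact ⟨c + e, d + e', lexdegLt_add e e' hcd, hf c d⟩

theorem stmt10 {n : ℕ} {K : Type*} [Field K]
    (X Y : Matrix (Fin n) (Fin n) K) (i j : Fin n → K)
    (hX : IsNilpotent X) (hY : IsNilpotent Y)
    (hc : X * Y - Y * X + Matrix.vecMulVec i j = 0) :
    ∀ a b a' b' : ℕ, a' ≤ a → b' ≤ b →
      inStaircase X Y i a b → inStaircase X Y i a' b' := by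
  intro a b a' b' ha hb hab hmem
  obtain ⟨e, rfl⟩ := Nat.exists_eq_add_of_le ha
  obtain ⟨e', rfl⟩ := Nat.exists_eq_add_of_le hb
  have hj := dotProduct_pow_mul_pow_mulVec_eq_zero hX hY hc
  exact hab (mem_span_lexdegLt_of_map (fun c d => (X ^ c * Y ^ d) *ᵥ i) (X ^ e * Y ^ e').mulVecLin
    (pow_mul_pow_mulVec_pow_mul_pow_mulVec hc hj e e') hmem)
end

section
/- For the specific pairs (X,Y) constructed in normal form — X with entries a_{q−p} in positions (p,q) for 1 ≤ p < q ≤ t+1 in the top block and a regular nilpotent Jordan block in the bottom block, Y with superdiagonal 1's in the top block and entries b_{q−p} in the bottom block, a_1 b_1 ≠ 1 — any matrix G with G·(X,Y,i,j) = (X,Y,i,j) (i.e., GXG^{-1}=X, GYG^{-1}=Y, Gi=i, jG^{-1}=j) satisfies G = I + Z where Z has all entries zero except possibly the (1,n) entry. In particular the isotropy group is one-dimensional. -/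
/-!
`Z = G - 1` commutes with `X` and `Y`, kills `i = e_{t-1}` and is killed by `j ∝ e_t^*`.
Since `Y e_{q+1} = e_q` for `q < t`, the vanishing of the column `Z e_{t-1}` spreads to all
columns `q < t`; since `e_p^* X = e_{p+1}^*` for `p ≥ t`, the vanishing of the row `e_t^* Z`
spreads to all rows `p ≥ t`. The remaining block (rows `< t`, columns `≥ t`) is cleared column
by column. An entry in a row `p ≥ 1` is the `(p-1, q)` entry of `YZ = ZY`, which only involves
earlier columns because `Y` is strictly upper triangular. For the top entry, comparing the
`(0, q+1)` entries of `ZX = XZ` and `ZY = YZ` gives `Z_{0q} = a₁ b₁ Z_{0q}`; this needs a column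
`q + 1`, which is why the corner entry `(0, n-1)` survives.
-/

open Matrix

section Semiring

variable {K : Type*} [Semiring K]

def normalFormX (n t : ℕ) (a : ℕ → K) : Matrix (Fin n) (Fin n) K :=
  Matrix.of fun p q : Fin n =>
    if (p : ℕ) < (q : ℕ) ∧ (q : ℕ) ≤ t then a ((q : ℕ) - (p : ℕ))
    else if t ≤ (p : ℕ) ∧ (q : ℕ) = (p : ℕ) + 1 then 1 else 0

def normalFormY (n t : ℕ) (b : ℕ → K) : Matrix (Fin n) (Fin n) K :=
  Matrix.of fun p q : Fin n =>
    if (q : ℕ) = (p : ℕ) + 1 ∧ (p : ℕ) < t then 1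
    else if t ≤ (p : ℕ) ∧ (p : ℕ) < (q : ℕ) then b ((q : ℕ) - (p : ℕ)) else 0

variable {n t : ℕ} (a b : ℕ → K) (Z : Matrix (Fin n) (Fin n) K)

theorem normalFormY_mul_apply_of_lt {p p' : Fin n} (hp : (p : ℕ) < t) (hp' : (p' : ℕ) = p + 1)
    (q : Fin n) : (normalFormY n t b * Z) p q = Z p' q := by
  rw [mul_apply, Fintype.sum_eq_single p']
  · simp [normalFormY, hp', hp]
  · intro m hm
    have := Fin.val_ne_of_ne hm
    simp only [normalFormY, of_apply]
    split_ifs <;> first | omega | simp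

theorem mul_normalFormY_apply_of_le {q q' : Fin n} (hq' : (q' : ℕ) = q + 1) (hq : (q' : ℕ) ≤ t)
    (p : Fin n) : (Z * normalFormY n t b) p q' = Z p q := by
  rw [mul_apply, Fintype.sum_eq_single q]
  · simp [normalFormY, hq']
    omega
  · intro m hm
    have := Fin.val_ne_of_ne hm
    simp only [normalFormY, of_apply]
    split_ifs <;> first | omega | simp

theorem mul_normalFormY_apply_eq_zero_of_forall_lt {p q : Fin n} (hZ : ∀ m < q, Z p m = 0) :
    (Z * normalFormY n t b) p q = 0 := by
  rw [mul_apply]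
  refine Finset.sum_eq_zero fun m _ => ?_
  rcases lt_or_ge m q with h | h
  · rw [hZ m h, zero_mul]
  · simp only [normalFormY, of_apply]
    split_ifs <;> first | omega | simp

theorem mul_normalFormY_apply_succ {p q q' : Fin n} (hq : t ≤ (q : ℕ)) (hq' : (q' : ℕ) = q + 1)
    (hZ : ∀ m < q, Z p m = 0) : (Z * normalFormY n t b) p q' = Z p q * b 1 := by
  rw [mul_apply, Fintype.sum_eq_single q]
  · simp only [normalFormY, of_apply, hq']
    rw [if_neg (by omega), if_pos (by omega), Nat.add_sub_cancel_left]
  · intro m hm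
    rcases lt_or_gt_of_ne hm with h | h
    · rw [hZ m h, zero_mul]
    · simp only [normalFormY, of_apply]
      split_ifs <;> first | omega | simp

theorem normalFormX_mul_apply_of_le {p p' : Fin n} (hp : t ≤ (p : ℕ)) (hp' : (p' : ℕ) = p + 1)
    (q : Fin n) : (normalFormX n t a * Z) p q = Z p' q := by
  rw [mul_apply, Fintype.sum_eq_single p']
  · simp [normalFormX, hp', hp]
  · intro m hm
    have := Fin.val_ne_of_ne hm
    simp only [normalFormX, of_apply]
    split_ifs <;> first | omega | simp

theorem mul_normalFormX_apply_of_le {q q' : Fin n} (hq : t ≤ (q : ℕ)) (hq' : (q' : ℕ) = q + 1)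
    (p : Fin n) : (Z * normalFormX n t a) p q' = Z p q := by
  rw [mul_apply, Fintype.sum_eq_single q]
  · simp [normalFormX, hq', hq]
  · intro m hm
    have := Fin.val_ne_of_ne hm
    simp only [normalFormX, of_apply]
    split_ifs <;> first | omega | simp

theorem normalFormX_mul_apply_zero {p₀ p₁ q : Fin n} (ht : 1 ≤ t) (hp₀ : (p₀ : ℕ) = 0)
    (hp₁ : (p₁ : ℕ) = 1) (hZ : ∀ m : Fin n, 2 ≤ (m : ℕ) → Z m q = 0) :
    (normalFormX n t a * Z) p₀ q = a 1 * Z p₁ q := by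
  rw [mul_apply, Fintype.sum_eq_single p₁]
  · simp only [normalFormX, of_apply, hp₀, hp₁]
    rw [if_pos (by omega)]
  · intro m hm
    have := Fin.val_ne_of_ne hm
    by_cases h : 2 ≤ (m : ℕ)
    · rw [hZ m h, mul_zero]
    · simp only [normalFormX, of_apply]
      split_ifs <;> first | omega | simp

variable {a b Z}

theorem apply_eq_zero_of_col_lt (hZY : Commute Z (normalFormY n t b)) {s : Fin n}
    (hs : (s : ℕ) + 1 = t) (hcol : Z.col s = 0) (p q : Fin n) (hq : (q : ℕ) < t) :
    Z p q = 0 := by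
  obtain ⟨d, hd⟩ : ∃ d, (q : ℕ) + 1 + d = t := ⟨t - (q + 1), by omega⟩
  induction d generalizing p q with
  | zero =>
    obtain rfl : q = s := Fin.ext (by omega)
    exact congrFun hcol p
  | succ d ih =>
    let q' : Fin n := ⟨q + 1, by omega⟩
    rw [← mul_normalFormY_apply_of_le b Z (q := q) (q' := q') rfl (show (q : ℕ) + 1 ≤ t by omega),
      hZY.eq, mul_apply]
    exact Finset.sum_eq_zero fun m _ => by
      rw [ih m q' (show (q : ℕ) + 1 < t by omega) (show (q : ℕ) + 1 + 1 + d = t by omega),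
        mul_zero]

theorem apply_eq_zero_of_row_ge (hZX : Commute Z (normalFormX n t a)) {r : Fin n}
    (hr : (r : ℕ) = t) (hrow : Z.row r = 0) (p q : Fin n) (hp : t ≤ (p : ℕ)) :
    Z p q = 0 := by
  obtain ⟨d, hd⟩ : ∃ d, (p : ℕ) = t + d := ⟨p - t, by omega⟩
  induction d generalizing p q with
  | zero =>
    obtain rfl : p = r := Fin.ext (by omega)
    exact congrFun hrow q
  | succ d ih =>
    let p₀ : Fin n := ⟨t + d, by omega⟩
    rw [← normalFormX_mul_apply_of_le a Z (p := p₀) (p' := p) (show t ≤ t + d from le_self_add)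
      (show (p : ℕ) = t + d + 1 by omega) q, ← hZX.eq, mul_apply]
    exact Finset.sum_eq_zero fun m _ => by
      rw [ih p₀ m (show t ≤ t + d from le_self_add) rfl, zero_mul]

theorem apply_eq_zero_of_row_pred (hZY : Commute Z (normalFormY n t b))
    (hrow : ∀ p q : Fin n, t ≤ (p : ℕ) → Z p q = 0) {p p' q : Fin n} (hp : (p : ℕ) = p' + 1)
    (hZ : ∀ m < q, Z p' m = 0) : Z p q = 0 := by
  by_cases hpt : t ≤ (p : ℕ)
  · exact hrow p q hpt
  · rw [← normalFormY_mul_apply_of_lt b Z (p := p') (show (p' : ℕ) < t by omega) hp, ← hZY.eq]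
    exact mul_normalFormY_apply_eq_zero_of_forall_lt b Z hZ

end Semiring

section CommRing

variable {K : Type*} [CommRing K] [IsDomain K] {n t : ℕ} {a b : ℕ → K} {Z : Matrix (Fin n) (Fin n) K}

theorem apply_row_zero_eq_zero (hab : a 1 * b 1 ≠ 1) (ht : 1 ≤ t)
    (hZX : Commute Z (normalFormX n t a)) (hZY : Commute Z (normalFormY n t b))
    {p₀ q q' : Fin n} (hp₀ : (p₀ : ℕ) = 0) (hq : t ≤ (q : ℕ)) (hq' : (q' : ℕ) = q + 1)
    (hrow : ∀ m < q, Z p₀ m = 0) (hcol : ∀ m : Fin n, 2 ≤ (m : ℕ) → Z m q' = 0) :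
    Z p₀ q = 0 := by
  let p₁ : Fin n := ⟨1, by omega⟩
  have h₁ : Z p₁ q' = Z p₀ q * b 1 := by
    rw [← normalFormY_mul_apply_of_lt b Z (p := p₀) (p' := p₁) (show (p₀ : ℕ) < t by omega)
      (by simp [p₁, hp₀]), ← hZY.eq, mul_normalFormY_apply_succ b Z hq hq' hrow]
  have h₀ : Z p₀ q = a 1 * (Z p₀ q * b 1) := calc
    Z p₀ q = (Z * normalFormX n t a) p₀ q' := (mul_normalFormX_apply_of_le a Z hq hq' p₀).symm
    _ = (normalFormX n t a * Z) p₀ q' := by rw [hZX.eq]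
    _ = a 1 * Z p₁ q' := normalFormX_mul_apply_zero a Z ht hp₀ rfl hcol
    _ = a 1 * (Z p₀ q * b 1) := by rw [h₁]
  have : Z p₀ q * (a 1 * b 1 - 1) = 0 := by linear_combination -h₀
  exact (mul_eq_zero.mp this).resolve_right (sub_ne_zero_of_ne hab)

theorem apply_eq_zero_of_ne_corner (hab : a 1 * b 1 ≠ 1) (ht : 1 ≤ t)
    (hZX : Commute Z (normalFormX n t a)) (hZY : Commute Z (normalFormY n t b))
    (hcol : ∀ p q : Fin n, (q : ℕ) < t → Z p q = 0)
    (hrow : ∀ p q : Fin n, t ≤ (p : ℕ) → Z p q = 0) (p q : Fin n)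
    (hpq : ¬((p : ℕ) = 0 ∧ (q : ℕ) = n - 1)) : Z p q = 0 := by
  induction q using WellFoundedLT.induction generalizing p with
  | _ q ih =>
  have hprev : ∀ p m : Fin n, m < q → Z p m = 0 := fun p m hm =>
    ih m hm p fun h => absurd (Fin.lt_def.mp hm) (by omega)
  have hupper : ∀ p : Fin n, 1 ≤ (p : ℕ) → Z p q = 0 := fun p hp =>
    apply_eq_zero_of_row_pred hZY hrow (p' := ⟨p - 1, by omega⟩) (by simp; omega) (hprev _)
  by_cases hp : 1 ≤ (p : ℕ)
  · exact hupper p hp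
  by_cases hq : (q : ℕ) < t
  · exact hcol p q hq
  let q' : Fin n := ⟨q + 1, by omega⟩
  refine apply_row_zero_eq_zero hab ht hZX hZY (q' := q') (by omega) (by omega) rfl (hprev p)
    fun m hm => apply_eq_zero_of_row_pred hZY hrow (p' := ⟨m - 1, by omega⟩) (by simp; omega)
      fun r hr => ?_
  obtain hr | rfl : r < q ∨ r = q := by
    have : (r : ℕ) < q + 1 := hr
    rw [Fin.lt_def, Fin.ext_iff]
    omega
  · exact hprev _ r hr
  · exact hupper _ (by simp; omega)

end CommRing

theorem stmt14 {n : ℕ} {K : Type*} [Field K]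
    (t : ℕ) (ht1 : 1 ≤ t) (ht2 : t + 2 ≤ n)
    (a b : ℕ → K) (hab : a 1 * b 1 ≠ 1)
    (X Y : Matrix (Fin n) (Fin n) K)
    (hX : X = Matrix.of fun p q : Fin n =>
      if (p : ℕ) < (q : ℕ) ∧ (q : ℕ) ≤ t then a ((q : ℕ) - (p : ℕ))
      else if t ≤ (p : ℕ) ∧ (q : ℕ) = (p : ℕ) + 1 then 1 else 0)
    (hY : Y = Matrix.of fun p q : Fin n =>
      if (q : ℕ) = (p : ℕ) + 1 ∧ (p : ℕ) < t then 1
      else if t ≤ (p : ℕ) ∧ (p : ℕ) < (q : ℕ) then b ((q : ℕ) - (p : ℕ)) else 0)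
    (i j : Fin n → K)
    (hi : i = fun k : Fin n => if (k : ℕ) + 1 = t then (1 : K) else 0)
    (hj : j = fun k : Fin n => if (k : ℕ) = t then a 1 * b 1 - 1 else (0 : K))
    (G : GL (Fin n) K)
    (hGX : (G : Matrix (Fin n) (Fin n) K) * X = X * (G : Matrix (Fin n) (Fin n) K))
    (hGY : (G : Matrix (Fin n) (Fin n) K) * Y = Y * (G : Matrix (Fin n) (Fin n) K))
    (hGi : (G : Matrix (Fin n) (Fin n) K) *ᵥ i = i)
    (hGj : j ᵥ* (G : Matrix (Fin n) (Fin n) K) = j) :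
    ∀ p q : Fin n, ¬((p : ℕ) = 0 ∧ (q : ℕ) = n - 1) →
      ((G : Matrix (Fin n) (Fin n) K) - 1) p q = 0 := by
  set Z := (G : Matrix (Fin n) (Fin n) K) - 1
  let iIdx : Fin n := ⟨t - 1, by omega⟩
  let jIdx : Fin n := ⟨t, by omega⟩
  have hi' : i = Pi.single iIdx 1 := by
    ext k
    simp only [hi, Pi.single_apply, Fin.ext_iff, iIdx]
    split_ifs <;> first | rfl | omega
  have hj' : j = Pi.single jIdx (a 1 * b 1 - 1) := by
    ext k
    simp [hj, Pi.single_apply, jIdx, Fin.ext_iff]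
  have hZi : Z.col iIdx = 0 := by
    rw [← mulVec_single_one, ← hi', sub_mulVec, hGi, one_mulVec, sub_self]
  have hZj : Z.row jIdx = 0 := by
    refine (smul_eq_zero.mp ?_).resolve_left (sub_ne_zero_of_ne hab)
    rw [← single_vecMul, ← hj', vecMul_sub, hGj, vecMul_one, sub_self]
  have hZX : Commute Z (normalFormX n t a) := by
    subst hX
    exact Commute.sub_left hGX (Commute.one_left _)
  have hZY : Commute Z (normalFormY n t b) := by
    subst hY
    exact Commute.sub_left hGY (Commute.one_left _)
  exact apply_eq_zero_of_ne_corner hab ht1 hZX hZY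
    (apply_eq_zero_of_col_lt hZY (by simp [iIdx]; omega) hZi)
    (apply_eq_zero_of_row_ge hZX rfl hZj)
end

section
/- Let L be the regular nilpotent Jordan block of size n, i_r = e_r, j_r = e_{r+1}^*. Then the quadruple (L, i_r j_r − L, i_r, j_r) satisfies: both L and i_r j_r − L are nilpotent, dim K[L]i_r = r, and dim j_r K[L] = n − r. -/
/-!
Both `L` and `i_r j_r - L` are supported on the superdiagonal, so they are strictly upper
triangular and Cayley–Hamilton kills them. `L` shifts the standard basis, `L e_a = e_{a-1}` and
`e_a L = e_{a+1}`; with 0-based indices `i_r = e_{r-1}` and `j_r = e_r`, so the orbit of `i_r`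
spans `e_0, …, e_{r-1}` and that of `j_r` spans `e_r, …, e_{n-1}`.
-/

open Matrix Module Set

theorem Matrix.isNilpotent_of_isUpperTriangular_of_diag_eq_zero {ι R : Type*} [Fintype ι]
    [DecidableEq ι] [LinearOrder ι] [CommRing R] {M : Matrix ι ι R}
    (hM : M.IsUpperTriangular) (hdiag : ∀ i, M i i = 0) : IsNilpotent M := by
  refine ⟨Fintype.card ι, ?_⟩
  have := M.aeval_self_charpoly
  rw [charpoly_of_isUpperTriangular M hM] at this
  simpa [hdiag] using this

theorem Int.range_sub_natCast (a : ℤ) : Set.range (fun k : ℕ => a - k) = Iic a := by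
  ext b
  refine ⟨?_, fun hb => ⟨(a - b).toNat, ?_⟩⟩
  · rintro ⟨k, rfl⟩
    simp
  · simp only [mem_Iic] at hb ⊢
    omega

theorem Int.range_add_natCast (a : ℤ) : Set.range (fun k : ℕ => a + k) = Ici a := by
  ext b
  refine ⟨?_, fun hb => ⟨(b - a).toNat, ?_⟩⟩
  · rintro ⟨k, rfl⟩
    simp
  · simp only [mem_Ici] at hb ⊢
    omega

namespace NilpotentShift

variable {n : ℕ}

theorem isNilpotent_of_apply_eq_zero_of_ne_succ {R : Type*} [CommRing R]
    {M : Matrix (Fin n) (Fin n) R} (hM : ∀ p q : Fin n, (q : ℕ) ≠ p + 1 → M p q = 0) :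
    IsNilpotent M :=
  isNilpotent_of_isUpperTriangular_of_diag_eq_zero
    (fun p q hqp => hM p q (by simp only [id] at hqp; omega))
    (fun p => hM p p (by omega))

section Semiring

variable {R : Type*} [Semiring R]

variable (n R) in
def shiftMatrix : Matrix (Fin n) (Fin n) R :=
  of fun p q => if (q : ℕ) = p + 1 then 1 else 0

variable (n R) in
/-- The standard basis vector `e_a`, indexed by an integer so that it is `0` for `a ∉ [0, n)`. -/
def unitVec (a : ℤ) : Fin n → R := fun p => if (p : ℤ) = a then 1 else 0

theorem unitVec_natCast (p : Fin n) : unitVec n R p = Pi.single p 1 := by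
  ext q
  simp [unitVec, Pi.single_apply, Fin.ext_iff]

theorem unitVec_eq_zero {a : ℤ} (ha : ∀ p : Fin n, (p : ℤ) ≠ a) : unitVec n R a = 0 :=
  funext fun p => if_neg (ha p)

theorem shiftMatrix_mulVec_apply (v : Fin n → R) (p : Fin n) :
    (shiftMatrix n R *ᵥ v) p = if h : (p : ℕ) + 1 < n then v ⟨p + 1, h⟩ else 0 := by
  simp only [mulVec, dotProduct, shiftMatrix, of_apply, ite_mul, one_mul, zero_mul]
  split_ifs with h
  · rw [Finset.sum_eq_single ⟨p + 1, h⟩ (fun q _ hq => if_neg fun hq' => hq (Fin.ext hq'))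
      (by simp), if_pos rfl]
  · exact Finset.sum_eq_zero fun q _ => if_neg (by omega)

theorem vecMul_shiftMatrix_apply (v : Fin n → R) (q : Fin n) :
    (v ᵥ* shiftMatrix n R) q = if h : 0 < (q : ℕ) then v ⟨q - 1, by omega⟩ else 0 := by
  simp only [vecMul, dotProduct, shiftMatrix, of_apply, mul_ite, mul_one, mul_zero]
  split_ifs with h
  · rw [Finset.sum_eq_single ⟨q - 1, by omega⟩
      (fun p _ hp => if_neg fun hp' => hp (Fin.ext (by simp only; omega))) (by simp),
      if_pos (by simp only; omega)]
  · exact Finset.sum_eq_zero fun p _ => if_neg (by omega)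

theorem shiftMatrix_mulVec_unitVec {a : ℤ} (ha : a < n) :
    shiftMatrix n R *ᵥ unitVec n R a = unitVec n R (a - 1) := by
  ext p
  rw [shiftMatrix_mulVec_apply]
  simp only [unitVec]
  split_ifs <;> first | rfl | omega

theorem unitVec_vecMul_shiftMatrix {a : ℤ} (ha : 0 ≤ a) :
    unitVec n R a ᵥ* shiftMatrix n R = unitVec n R (a + 1) := by
  ext q
  rw [vecMul_shiftMatrix_apply]
  simp only [unitVec]
  split_ifs <;> first | rfl | omega

theorem shiftMatrix_pow_mulVec_unitVec {a : ℤ} (ha : a < n) (k : ℕ) :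
    shiftMatrix n R ^ k *ᵥ unitVec n R a = unitVec n R (a - k) := by
  induction k with
  | zero => simp
  | succ k ih =>
    rw [pow_succ', ← mulVec_mulVec, ih, shiftMatrix_mulVec_unitVec (by omega)]
    push_cast
    ring_nf

theorem unitVec_vecMul_shiftMatrix_pow {a : ℤ} (ha : 0 ≤ a) (k : ℕ) :
    unitVec n R a ᵥ* shiftMatrix n R ^ k = unitVec n R (a + k) := by
  induction k with
  | zero => simp
  | succ k ih =>
    rw [pow_succ, ← vecMul_vecMul, ih, unitVec_vecMul_shiftMatrix (by omega)]
    push_cast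
    ring_nf

theorem range_shiftMatrix_pow_mulVec_unitVec {a : ℤ} (ha : a < n) :
    Set.range (fun k : ℕ => shiftMatrix n R ^ k *ᵥ unitVec n R a) = unitVec n R '' Iic a := by
  simp_rw [shiftMatrix_pow_mulVec_unitVec ha]
  rw [range_comp', Int.range_sub_natCast]

theorem range_unitVec_vecMul_shiftMatrix_pow {a : ℤ} (ha : 0 ≤ a) :
    Set.range (fun k : ℕ => unitVec n R a ᵥ* shiftMatrix n R ^ k) = unitVec n R '' Ici a := by
  simp_rw [unitVec_vecMul_shiftMatrix_pow ha]
  rw [range_comp', Int.range_add_natCast]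

end Semiring

theorem isNilpotent_shiftMatrix {R : Type*} [CommRing R] : IsNilpotent (shiftMatrix n R) :=
  isNilpotent_of_apply_eq_zero_of_ne_succ fun _ _ h => if_neg h

section DivisionRing

variable {K : Type*} [DivisionRing K]

theorem finrank_span_image_unitVec (S : Set ℤ) :
    finrank K (Submodule.span K (unitVec n K '' S)) = Nat.card {p : Fin n // (p : ℤ) ∈ S} := by
  classical
  have hspan : Submodule.span K (unitVec n K '' S) = Submodule.span K
      (Set.range (Pi.basisFun K (Fin n) ∘ ((↑) : {p : Fin n // (p : ℤ) ∈ S} → Fin n))) := by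
    refine le_antisymm (Submodule.span_le.mpr ?_) (Submodule.span_mono ?_)
    · rintro _ ⟨a, ha, rfl⟩
      by_cases h : ∃ p : Fin n, (p : ℤ) = a
      · obtain ⟨p, rfl⟩ := h
        exact Submodule.subset_span ⟨⟨p, ha⟩, by simp [unitVec_natCast]⟩
      · rw [unitVec_eq_zero (not_exists.mp h)]
        exact zero_mem _
    · rintro _ ⟨⟨p, hp⟩, rfl⟩
      exact ⟨p, hp, by simp [unitVec_natCast]⟩
  rw [hspan, finrank_span_eq_card ((Pi.basisFun K (Fin n)).linearIndependent.comp _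
    Subtype.val_injective), Nat.card_eq_fintype_card]

theorem finrank_span_image_unitVec_Iic {r : ℕ} (hr : r ≤ n) :
    finrank K (Submodule.span K (unitVec n K '' Iic ((r : ℤ) - 1))) = r := by
  rw [finrank_span_image_unitVec, Nat.card_congr (Equiv.subtypeEquivRight
      (q := fun p : Fin n => (p : ℕ) < r) fun p => by rw [mem_Iic]; omega),
    Nat.card_eq_fintype_card, Fintype.card_fin_lt_of_le hr]

theorem finrank_span_image_unitVec_Ici {r : ℕ} (hr : r ≤ n) :
    finrank K (Submodule.span K (unitVec n K '' Ici (r : ℤ))) = n - r := by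
  classical
  rw [finrank_span_image_unitVec, Nat.card_congr (Equiv.subtypeEquivRight
      (q := fun p : Fin n => ¬(p : ℕ) < r) fun p => by rw [mem_Ici]; omega),
    Nat.card_eq_fintype_card, Fintype.card_subtype_compl, Fintype.card_fin_lt_of_le hr,
    Fintype.card_fin]

end DivisionRing

end NilpotentShift

open NilpotentShift in
theorem stmt15_general {n : ℕ} {K : Type*} [Field K]
    (r : ℕ) (hr : r ≤ n - 1)
    (L : Matrix (Fin n) (Fin n) K)
    (hL : L = Matrix.of fun p q : Fin n => if (q : ℕ) = (p : ℕ) + 1 then 1 else 0)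
    (i j : Fin n → K)
    (hi : i = fun k : Fin n => if (k : ℕ) + 1 = r then (1 : K) else 0)
    (hj : j = fun k : Fin n => if (k : ℕ) = r then (1 : K) else 0) :
    IsNilpotent L ∧ IsNilpotent (Matrix.vecMulVec i j - L) ∧
    Module.finrank K (Submodule.span K (Set.range fun k : ℕ => (L ^ k) *ᵥ i)) = r ∧
    Module.finrank K (Submodule.span K (Set.range fun k : ℕ => j ᵥ* (L ^ k))) = n - r := by
  obtain rfl : L = shiftMatrix n K := hL
  obtain rfl : i = unitVec n K ((r : ℤ) - 1) := by
    rw [hi]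
    ext k
    simp only [unitVec]
    split_ifs <;> first | rfl | omega
  obtain rfl : j = unitVec n K (r : ℤ) := by
    rw [hj]
    ext k
    simp [unitVec]
  refine ⟨isNilpotent_shiftMatrix, ?_, ?_, ?_⟩
  · refine isNilpotent_of_apply_eq_zero_of_ne_succ fun p q hpq => ?_
    simp only [Matrix.sub_apply, vecMulVec_apply, unitVec, shiftMatrix, of_apply, if_neg hpq]
    split_ifs <;> first | omega | simp
  · rw [range_shiftMatrix_pow_mulVec_unitVec (by omega), finrank_span_image_unitVec_Iic (by omega)]
  · rw [range_unitVec_vecMul_shiftMatrix_pow (by omega), finrank_span_image_unitVec_Ici (by omega)]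

theorem stmt15 {n : ℕ} {K : Type*} [Field K]
    (hn : 1 ≤ n) (r : ℕ) (hr : r ≤ n - 1)
    (L : Matrix (Fin n) (Fin n) K)
    (hL : L = Matrix.of fun p q : Fin n => if (q : ℕ) = (p : ℕ) + 1 then 1 else 0)
    (i j : Fin n → K)
    (hi : i = fun k : Fin n => if (k : ℕ) + 1 = r then (1 : K) else 0)
    (hj : j = fun k : Fin n => if (k : ℕ) = r then (1 : K) else 0) :
    IsNilpotent L ∧ IsNilpotent (Matrix.vecMulVec i j - L) ∧
    Module.finrank K (Submodule.span K (Set.range fun k : ℕ => (L ^ k) *ᵥ i)) = r ∧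
    Module.finrank K (Submodule.span K (Set.range fun k : ℕ => j ᵥ* (L ^ k))) = n - r :=
  stmt15_general r hr L hL i j hi hj
end

section
/- The variety S_{r,n−r} = {(A,B,i,j) : A, B nilpotent, A+B = ij, dim K[A]i ≤ r, dim jK[A] ≤ n−r} contains the point (L, i_r j_r − L, i_r, j_r), and this point does NOT lie in S_{r', n−r'} for any r' ≠ r. Hence the closed sets S_{r,n−r}, 0 ≤ r ≤ n−1, are pairwise non-redundant (none is contained in the union of the others). -/
/-!
The shift matrix `L` sends `e_{p+1}` to `e_p` and `e_p^*` to `e_{p+1}^*`. Hence the Krylov space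
`K[L] i_r` is spanned by the coordinate vectors `e_1, …, e_r` and `j_r K[L]` by
`e_{r+1}^*, …, e_n^*`, so their dimensions are exactly `r` and `n - r`; the pair of bounds
`(r', n - r')` can only hold for `r' = r`. Both `L` and `i_r j_r - L` are strictly upper
triangular, hence nilpotent.
-/

open Matrix Submodule

theorem Fin.sum_univ_ite_val_eq {M : Type*} [AddCommMonoid M] {n : ℕ} (c : ℕ) (w : Fin n → M) :
    (∑ q : Fin n, if (q : ℕ) = c then w q else 0) = if h : c < n then w ⟨c, h⟩ else 0 := by
  split_ifs with h
  · simp_rw [← Fin.ext_iff (b := ⟨c, h⟩)]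
    exact Finset.sum_ite_eq' _ _ _ |>.trans (if_pos (Finset.mem_univ _))
  · exact Finset.sum_eq_zero fun q _ => if_neg (by omega)

theorem finrank_span_image_single {K ι : Type*} [Field K] [Fintype ι] [DecidableEq ι]
    (s : Finset ι) :
    Module.finrank K (span K ((fun q => Pi.single q (1 : K)) '' (s : Set ι))) = s.card := by
  have hli : LinearIndependent K fun q : (s : Set ι) => (Pi.single (q : ι) (1 : K) : ι → K) :=
    (Pi.linearIndependent_single_one ι K).comp _ Subtype.val_injective
  rw [Set.image_eq_range, finrank_span_eq_card hli]
  exact Fintype.card_coe s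

namespace Matrix

variable {R : Type*} [Semiring R] {n : ℕ}

theorem isNilpotent_of_apply_eq_zero_of_le (M : Matrix (Fin n) (Fin n) R)
    (h : ∀ p q : Fin n, q ≤ p → M p q = 0) : IsNilpotent M := by
  have hpow : ∀ k : ℕ, ∀ p q : Fin n, (q : ℕ) < k + p → (M ^ k) p q = 0 := by
    intro k
    induction k with
    | zero =>
      intro p q hq
      exact one_apply_ne (by omega)
    | succ k ih =>
      intro p q hq
      rw [pow_succ', mul_apply]
      refine Finset.sum_eq_zero fun m _ => ?_
      by_cases hm : m ≤ p
      · rw [h p m hm, zero_mul]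
      · rw [ih m q (by omega), mul_zero]
  exact ⟨n, by ext p q; exact hpow n p q (by omega)⟩

variable (R n) in
def shiftMatrix : Matrix (Fin n) (Fin n) R :=
  of fun p q => if (q : ℕ) = p + 1 then 1 else 0

theorem shiftMatrix_pow_apply (k : ℕ) (p q : Fin n) :
    (shiftMatrix R n ^ k) p q = if (q : ℕ) = p + k then 1 else 0 := by
  induction k generalizing q with
  | zero => simp [one_apply, Fin.ext_iff, eq_comm]
  | succ k ih =>
    simp only [pow_succ, mul_apply, ih]
    simp only [shiftMatrix, of_apply, ite_mul, one_mul, zero_mul, Fin.sum_univ_ite_val_eq]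
    split_ifs <;> first | rfl | omega

theorem shiftMatrix_pow_mulVec_apply (k : ℕ) (v : Fin n → R) (p : Fin n) :
    (shiftMatrix R n ^ k *ᵥ v) p = if h : p + k < n then v ⟨p + k, h⟩ else 0 := by
  simp only [mulVec, dotProduct, shiftMatrix_pow_apply, ite_mul, one_mul, zero_mul,
    Fin.sum_univ_ite_val_eq]

theorem vecMul_shiftMatrix_pow_apply (k : ℕ) (v : Fin n → R) (q : Fin n) :
    (v ᵥ* shiftMatrix R n ^ k) q = if h : k ≤ q then v ⟨q - k, by omega⟩ else 0 := by
  simp only [vecMul, dotProduct, shiftMatrix_pow_apply, mul_ite, mul_one, mul_zero]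
  split_ifs with h
  · have hq : ∀ p : Fin n, (q : ℕ) = p + k ↔ (p : ℕ) = q - k := fun p => by omega
    simp_rw [hq, Fin.sum_univ_ite_val_eq, dif_pos (q.2.trans_le' (Nat.sub_le q k))]
  · exact Finset.sum_eq_zero fun p _ => if_neg (by omega)

end Matrix

section ShiftMatrix

variable {K : Type*} [Field K] {n r : ℕ}

-- The paper's `i_r = e_r` in `0`-based coordinates: its `1` sits at index `r - 1`, and it
-- vanishes for `r = 0`.
theorem shiftMatrix_pow_mulVec_indicator (hr : r ≤ n) (k : ℕ) :
    (shiftMatrix K n ^ k *ᵥ fun p : Fin n => if (p : ℕ) + 1 = r then 1 else 0) =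
      fun p : Fin n => if (p : ℕ) + 1 + k = r then (1 : K) else 0 := by
  funext p
  rw [shiftMatrix_pow_mulVec_apply]
  dsimp only
  split_ifs <;> first | rfl | omega

theorem indicator_vecMul_shiftMatrix_pow (k : ℕ) :
    ((fun q : Fin n => if (q : ℕ) = r then 1 else 0) ᵥ* shiftMatrix K n ^ k) =
      fun q : Fin n => if (q : ℕ) = r + k then (1 : K) else 0 := by
  funext q
  rw [vecMul_shiftMatrix_pow_apply]
  dsimp only
  split_ifs <;> first | rfl | omega

theorem span_range_shiftMatrix_pow_mulVec (hr : r ≤ n) :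
    span K (Set.range fun k =>
        shiftMatrix K n ^ k *ᵥ fun p : Fin n => if (p : ℕ) + 1 = r then (1 : K) else 0) =
      span K ((fun q => Pi.single q (1 : K)) '' ↑({q | (q : ℕ) < r} : Finset (Fin n))) := by
  simp_rw [shiftMatrix_pow_mulVec_indicator hr]
  refine span_eq_span ?_ ?_
  · rintro _ ⟨k, rfl⟩
    by_cases hk : k < r
    · refine subset_span ⟨⟨r - 1 - k, by omega⟩, by simp; omega, ?_⟩
      funext p
      simp only [Pi.single_apply, Fin.ext_iff]
      split_ifs <;> first | rfl | omega
    · rw [SetLike.mem_coe]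
      convert zero_mem (span K _)
      funext p
      exact if_neg (by omega)
  · rintro _ ⟨q, hq, rfl⟩
    simp only [Finset.coe_filter, Finset.mem_univ, true_and, Set.mem_ofPred_eq] at hq
    refine subset_span ⟨r - 1 - q, ?_⟩
    funext p
    simp only [Pi.single_apply, Fin.ext_iff]
    split_ifs <;> first | rfl | omega

theorem span_range_vecMul_shiftMatrix_pow :
    span K (Set.range fun k =>
        (fun q : Fin n => if (q : ℕ) = r then (1 : K) else 0) ᵥ* shiftMatrix K n ^ k) =
      span K ((fun q => Pi.single q (1 : K)) '' ↑({q | r ≤ (q : ℕ)} : Finset (Fin n))) := by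
  simp_rw [indicator_vecMul_shiftMatrix_pow]
  refine span_eq_span ?_ ?_
  · rintro _ ⟨k, rfl⟩
    by_cases hk : r + k < n
    · refine subset_span ⟨⟨r + k, hk⟩, by simp, ?_⟩
      funext q
      simp only [Pi.single_apply, Fin.ext_iff]
    · rw [SetLike.mem_coe]
      convert zero_mem (span K _)
      funext q
      exact if_neg (by omega)
  · rintro _ ⟨q, hq, rfl⟩
    simp only [Finset.coe_filter, Finset.mem_univ, true_and, Set.mem_ofPred_eq] at hq
    refine subset_span ⟨q - r, ?_⟩
    funext p
    simp only [Pi.single_apply, Fin.ext_iff]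
    split_ifs <;> first | rfl | omega

theorem finrank_span_range_shiftMatrix_pow_mulVec (hr : r ≤ n) :
    Module.finrank K (span K (Set.range fun k =>
        shiftMatrix K n ^ k *ᵥ fun p : Fin n => if (p : ℕ) + 1 = r then (1 : K) else 0)) = r := by
  rw [span_range_shiftMatrix_pow_mulVec hr, finrank_span_image_single, Fin.card_filter_val_lt,
    min_eq_right hr]

theorem finrank_span_range_vecMul_shiftMatrix_pow :
    Module.finrank K (span K (Set.range fun k =>
        (fun q : Fin n => if (q : ℕ) = r then (1 : K) else 0) ᵥ* shiftMatrix K n ^ k)) = n - r := by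
  have hsplit := Finset.card_filter_add_card_filter_not (s := Finset.univ)
    (p := fun q : Fin n => (q : ℕ) < r)
  simp only [Fin.card_filter_val_lt, not_lt, Finset.card_univ, Fintype.card_fin] at hsplit
  rw [span_range_vecMul_shiftMatrix_pow, finrank_span_image_single]
  omega

end ShiftMatrix

theorem stmt17_general {n : ℕ} {K : Type*} [Field K]
    (r : ℕ) (hr : r ≤ n - 1)
    (L : Matrix (Fin n) (Fin n) K)
    (hL : L = Matrix.of fun p q : Fin n => if (q : ℕ) = (p : ℕ) + 1 then 1 else 0)
    (i j : Fin n → K)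
    (hi : i = fun k : Fin n => if (k : ℕ) + 1 = r then (1 : K) else 0)
    (hj : j = fun k : Fin n => if (k : ℕ) = r then (1 : K) else 0) :
    (IsNilpotent L ∧ IsNilpotent (Matrix.vecMulVec i j - L) ∧
      Module.finrank K (Submodule.span K (Set.range fun k : ℕ => (L ^ k) *ᵥ i)) ≤ r ∧
      Module.finrank K (Submodule.span K (Set.range fun k : ℕ => j ᵥ* (L ^ k))) ≤ n - r) ∧
    ∀ r' : ℕ, r' ≤ n - 1 → r' ≠ r →
      ¬(Module.finrank K (Submodule.span K (Set.range fun k : ℕ => (L ^ k) *ᵥ i)) ≤ r' ∧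
        Module.finrank K (Submodule.span K (Set.range fun k : ℕ => j ᵥ* (L ^ k))) ≤ n - r') := by
  replace hL : L = shiftMatrix K n := hL
  subst hL hi hj
  have hdim_i := finrank_span_range_shiftMatrix_pow_mulVec (K := K) (show r ≤ n by omega)
  have hdim_j := finrank_span_range_vecMul_shiftMatrix_pow (K := K) (n := n) (r := r)
  refine ⟨⟨?_, ?_, hdim_i.le, hdim_j.le⟩, fun r' hr' hne h => ?_⟩
  · exact isNilpotent_of_apply_eq_zero_of_le _ fun p q hqp => if_neg (by omega)
  · refine isNilpotent_of_apply_eq_zero_of_le _ fun p q hqp => ?_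
    simp only [Matrix.sub_apply, vecMulVec_apply, shiftMatrix, of_apply]
    split_ifs <;> first | omega | simp
  · rw [hdim_i, hdim_j] at h
    omega

theorem stmt17 {n : ℕ} {K : Type*} [Field K]
    (hn : 2 ≤ n) (r : ℕ) (hr : r ≤ n - 1)
    (L : Matrix (Fin n) (Fin n) K)
    (hL : L = Matrix.of fun p q : Fin n => if (q : ℕ) = (p : ℕ) + 1 then 1 else 0)
    (i j : Fin n → K)
    (hi : i = fun k : Fin n => if (k : ℕ) + 1 = r then (1 : K) else 0)
    (hj : j = fun k : Fin n => if (k : ℕ) = r then (1 : K) else 0) :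
    (IsNilpotent L ∧ IsNilpotent (Matrix.vecMulVec i j - L) ∧
      Module.finrank K (Submodule.span K (Set.range fun k : ℕ => (L ^ k) *ᵥ i)) ≤ r ∧
      Module.finrank K (Submodule.span K (Set.range fun k : ℕ => j ᵥ* (L ^ k))) ≤ n - r) ∧
    ∀ r' : ℕ, r' ≤ n - 1 → r' ≠ r →
      ¬(Module.finrank K (Submodule.span K (Set.range fun k : ℕ => (L ^ k) *ᵥ i)) ≤ r' ∧
        Module.finrank K (Submodule.span K (Set.range fun k : ℕ => j ᵥ* (L ^ k))) ≤ n - r') :=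
  stmt17_general r hr L hL i j hi hj
end

section
/- If X, Y are nilpotent n×n matrices with [X,Y] + ij = 0 and r = dim K⟨X,Y⟩i, s = dim jK⟨X,Y⟩, then r + s ≤ n; moreover if r > 0 and s > 0 then r + s ≤ n − 1. -/
/-!
Write `f, g` for the nilpotent operators, `W = K⟨f, g⟩ i`, and `N` for the annihilator of
`j K⟨f, g⟩`, i.e. the largest `f, g`-invariant subspace of `ker j`; thus `dim N = n - s`.

The heart of the matter is `W ≤ N`, i.e. `j a i = 0` for every `a ∈ K⟨f, g⟩`, which gives
`r + s ≤ n`. It is proved by induction on the dimension: the relation `[f, g] + i j = 0` survives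
restriction to a proper invariant subspace containing `i` and passage to the quotient by a common
kernel vector of `f, g` lying in `ker j`. When neither reduction is possible, `ker f ⊄ ker j`
(otherwise `g` preserves `ker f`, and `f, g` have a common kernel vector in `ker j`), and the
relation evaluated at a vector of `ker f \ ker j` puts `i` in the image of `f`. The same argument
applied to the transposed solution `(fᵀ, gᵀ, -j, i)` gives a functional vanishing on the image of
`f` but not at `i`.

If `r + s = n` with `r, s > 0`, then `W = N ⊆ ker j`, so `f` and `g` commute on `W` and on `V / W`.
Commuting nilpotent operators on `W ≠ 0` satisfy `f W + g W ≠ W`, hence `i ∉ f W + g W` (that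
subspace is invariant, so it would contain `W`). A common kernel vector `v` of `f, g` on
`V / W ≠ 0` has `j v ≠ 0` by maximality of `N`, and then `i = (j v)⁻¹ (g f v - f g v)` lies in
`f W + g W` after all.
-/

open Module

section Nilpotent

variable {K V : Type*} [Field K] [AddCommGroup V] [Module K V] {f g : Module.End K V}

theorem Module.End.exists_ne_zero_apply_eq_zero_of_isNilpotent [Nontrivial V]
    (hf : IsNilpotent f) : ∃ v ≠ 0, f v = 0 := by
  by_contra! h
  have hinj : Function.Injective f :=
    (injective_iff_map_eq_zero f).2 fun v hv => by_contra fun h0 => h v h0 hv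
  obtain ⟨k, hk⟩ := hf
  obtain ⟨v, hv⟩ := exists_ne (0 : V)
  apply hv
  apply hinj.iterate k
  rw [← Module.End.coe_pow, hk, LinearMap.zero_apply, map_zero]

theorem Module.End.exists_ne_zero_apply_eq_zero_apply_eq_zero [Nontrivial V]
    (hf : IsNilpotent f) (hg : IsNilpotent g) (hgf : ∀ v, f v = 0 → f (g v) = 0) :
    ∃ v ≠ 0, f v = 0 ∧ g v = 0 := by
  obtain ⟨v, hv, hfv⟩ := exists_ne_zero_apply_eq_zero_of_isNilpotent hf
  have : Nontrivial (LinearMap.ker f) :=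
    nontrivial_of_ne ⟨v, hfv⟩ 0 fun h => hv (congrArg Subtype.val h)
  obtain ⟨w, hw, hgw⟩ := exists_ne_zero_apply_eq_zero_of_isNilpotent
    (Module.End.isNilpotent.restrict (f := g) (p := LinearMap.ker f) hgf hg)
  exact ⟨w, by simpa using hw, w.2, congrArg Subtype.val hgw⟩

theorem LinearMap.dualMap_pow (f : Module.End K V) (k : ℕ) :
    f.dualMap ^ k = (f ^ k).dualMap := by
  induction k with
  | zero => simp only [pow_zero]; exact LinearMap.dualMap_id.symm
  | succ k ih =>
    rw [pow_succ, ih, pow_succ', Module.End.mul_eq_comp, Module.End.mul_eq_comp,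
      LinearMap.dualMap_comp_dualMap]

theorem IsNilpotent.dualMap (hf : IsNilpotent f) : IsNilpotent f.dualMap := by
  obtain ⟨k, hk⟩ := hf
  exact ⟨k, by rw [LinearMap.dualMap_pow, hk]; ext; simp⟩

theorem Module.End.range_sup_range_ne_top [Nontrivial V] (hf : IsNilpotent f)
    (hg : IsNilpotent g) (hfg : Commute f g) :
    LinearMap.range f ⊔ LinearMap.range g ≠ ⊤ := by
  obtain ⟨φ, hφ, hfφ, hgφ⟩ := exists_ne_zero_apply_eq_zero_apply_eq_zero hf.dualMap hg.dualMap
    fun φ hφ => by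
      ext v
      rw [LinearMap.dualMap_apply, LinearMap.dualMap_apply, ← Module.End.mul_apply, ← hfg.eq,
        Module.End.mul_apply, ← LinearMap.dualMap_apply, hφ, LinearMap.zero_apply,
        LinearMap.zero_apply]
  intro htop
  apply hφ
  rw [← LinearMap.ker_eq_top, eq_top_iff, ← htop, sup_le_iff, LinearMap.range_le_ker_iff,
    LinearMap.range_le_ker_iff]
  exact ⟨hfφ, hgφ⟩

end Nilpotent

section Invariant

variable {K V : Type*} [Field K] [AddCommGroup V] [Module K V]

def IsJointlyInvariant (f g : Module.End K V) (W : Submodule K V) : Prop :=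
  W ≤ W.comap f ∧ W ≤ W.comap g

variable {f g : Module.End K V}

theorem IsJointlyInvariant.map_subtype {W : Submodule K V} (hW : IsJointlyInvariant f g W)
    {U : Submodule K W} (hU : IsJointlyInvariant (f.restrict hW.1) (g.restrict hW.2) U) :
    IsJointlyInvariant f g (U.map W.subtype) := by
  constructor <;> rintro _ ⟨u, hu, rfl⟩
  · exact ⟨_, hU.1 hu, rfl⟩
  · exact ⟨_, hU.2 hu, rfl⟩

theorem IsJointlyInvariant.comap_mkQ {N : Submodule K V} (hN : IsJointlyInvariant f g N)
    {U : Submodule K (V ⧸ N)} (hU : IsJointlyInvariant (N.mapQ N f hN.1) (N.mapQ N g hN.2) U) :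
    IsJointlyInvariant f g (U.comap N.mkQ) :=
  ⟨fun _ hv => hU.1 hv, fun _ hv => hU.2 hv⟩

theorem IsJointlyInvariant.map_sup_map_ne {W : Submodule K V} (hW : IsJointlyInvariant f g W)
    (hW0 : W ≠ ⊥) (hf : IsNilpotent f) (hg : IsNilpotent g)
    (hfg : ∀ w ∈ W, f (g w) = g (f w)) : W.map f ⊔ W.map g ≠ W := by
  have : Nontrivial W := Submodule.nontrivial_iff_ne_bot.2 hW0
  have key := Module.End.range_sup_range_ne_top (Module.End.isNilpotent.restrict hW.1 hf)
    (Module.End.isNilpotent.restrict hW.2 hg) (LinearMap.ext fun w => Subtype.ext (hfg w w.2))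
  contrapose! key
  refine eq_top_iff.2 fun u _ => ?_
  obtain ⟨_, ⟨w₁, hw₁, rfl⟩, _, ⟨w₂, hw₂, rfl⟩, hu⟩ := Submodule.mem_sup.1 (key.ge u.2)
  exact Submodule.mem_sup.2 ⟨_, ⟨⟨w₁, hw₁⟩, rfl⟩, _, ⟨⟨w₂, hw₂⟩, rfl⟩, Subtype.ext hu⟩

theorem IsJointlyInvariant.lift_apply_mem {U : Submodule K V} (hU : IsJointlyInvariant f g U)
    (p : FreeAlgebra K (Fin 2)) {v : V} (hv : v ∈ U) : FreeAlgebra.lift K ![f, g] p v ∈ U := by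
  induction p using FreeAlgebra.induction generalizing v with
  | grade0 r => simpa [Module.algebraMap_end_apply] using U.smul_mem r hv
  | grade1 x =>
    fin_cases x
    · simpa using hU.1 hv
    · simpa using hU.2 hv
  | mul a b ha hb => simpa using ha (hb hv)
  | add a b ha hb => simpa using U.add_mem (ha hv) (hb hv)

variable (f g) in
/-- `cyclicSubmodule f g i = K⟨f, g⟩ i` and `cocyclicSubmodule f g j = j K⟨f, g⟩`, where the free
algebra on two generators plays the role of `K⟨x, y⟩`. -/
def cyclicSubmodule (i : V) : Submodule K V :=
  Submodule.span K (Set.range fun p : FreeAlgebra K (Fin 2) => FreeAlgebra.lift K ![f, g] p i)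

variable (f g) in
def cocyclicSubmodule (j : Dual K V) : Submodule K (Dual K V) :=
  Submodule.span K (Set.range fun p : FreeAlgebra K (Fin 2) => j ∘ₗ FreeAlgebra.lift K ![f, g] p)

theorem mem_cyclicSubmodule_self (i : V) : i ∈ cyclicSubmodule f g i :=
  Submodule.subset_span ⟨1, by simp⟩

theorem isJointlyInvariant_cyclicSubmodule (i : V) :
    IsJointlyInvariant f g (cyclicSubmodule f g i) := by
  constructor <;> refine Submodule.span_le.2 ?_ <;> rintro _ ⟨p, rfl⟩
  · exact Submodule.subset_span ⟨FreeAlgebra.ι K 0 * p, by simp⟩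
  · exact Submodule.subset_span ⟨FreeAlgebra.ι K 1 * p, by simp⟩

theorem cyclicSubmodule_le {i : V} {U : Submodule K V} (hU : IsJointlyInvariant f g U)
    (hi : i ∈ U) : cyclicSubmodule f g i ≤ U :=
  Submodule.span_le.2 <| by rintro _ ⟨p, rfl⟩; exact hU.lift_apply_mem p hi

theorem mem_dualCoannihilator_cocyclicSubmodule {j : Dual K V} {v : V} :
    v ∈ (cocyclicSubmodule f g j).dualCoannihilator ↔
      ∀ p : FreeAlgebra K (Fin 2), j (FreeAlgebra.lift K ![f, g] p v) = 0 := by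
  rw [Submodule.mem_dualCoannihilator]
  refine ⟨fun hv p => hv _ (Submodule.subset_span ⟨p, rfl⟩), fun hv φ hφ => ?_⟩
  refine (Submodule.span_le (p := LinearMap.ker (Dual.eval K V v))).2 ?_ hφ
  rintro _ ⟨p, rfl⟩
  exact hv p

theorem dualCoannihilator_cocyclicSubmodule_le_ker (j : Dual K V) :
    (cocyclicSubmodule f g j).dualCoannihilator ≤ LinearMap.ker j :=
  fun v hv => by simpa using mem_dualCoannihilator_cocyclicSubmodule.1 hv 1

theorem le_dualCoannihilator_cocyclicSubmodule {j : Dual K V} {U : Submodule K V}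
    (hU : IsJointlyInvariant f g U) (hUj : U ≤ LinearMap.ker j) :
    U ≤ (cocyclicSubmodule f g j).dualCoannihilator :=
  fun _ hv => mem_dualCoannihilator_cocyclicSubmodule.2 fun p => hUj (hU.lift_apply_mem p hv)

end Invariant

structure IsNilpotentSolution {K V : Type*} [Field K] [AddCommGroup V] [Module K V]
    (f g : Module.End K V) (i : V) (j : Dual K V) : Prop where
  isNilpotent_left : IsNilpotent f
  isNilpotent_right : IsNilpotent g
  comm_add : ∀ v, f (g v) - g (f v) + j v • i = 0

namespace IsNilpotentSolution

variable {K V : Type*} [Field K] [AddCommGroup V] [Module K V]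
  {f g : Module.End K V} {i : V} {j : Dual K V}

theorem sub_eq (h : IsNilpotentSolution f g i j) (v : V) :
    f (g v) - g (f v) = -(j v • i) :=
  eq_neg_of_add_eq_zero_left (h.comm_add v)

theorem comm_of_apply_eq_zero (h : IsNilpotentSolution f g i j) {v : V} (hv : j v = 0) :
    f (g v) = g (f v) :=
  sub_eq_zero.1 (by rw [h.sub_eq, hv, zero_smul, neg_zero])

theorem restrict (h : IsNilpotentSolution f g i j) {W : Submodule K V}
    (hW : IsJointlyInvariant f g W) (hi : i ∈ W) :
    IsNilpotentSolution (f.restrict hW.1) (g.restrict hW.2) ⟨i, hi⟩ (j ∘ₗ W.subtype) where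
  isNilpotent_left := Module.End.isNilpotent.restrict _ h.isNilpotent_left
  isNilpotent_right := Module.End.isNilpotent.restrict _ h.isNilpotent_right
  comm_add w := Subtype.ext (h.comm_add w)

theorem quotient (h : IsNilpotentSolution f g i j) {N : Submodule K V}
    (hN : IsJointlyInvariant f g N) (hNj : N ≤ LinearMap.ker j) :
    IsNilpotentSolution (N.mapQ N f hN.1) (N.mapQ N g hN.2) (N.mkQ i) (N.liftQ j hNj) where
  isNilpotent_left := Module.End.IsNilpotent.mapQ _ h.isNilpotent_left
  isNilpotent_right := Module.End.IsNilpotent.mapQ _ h.isNilpotent_right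
  comm_add x := by
    obtain ⟨v, rfl⟩ := N.mkQ_surjective x
    simpa [← map_smul, ← map_sub, ← map_add] using congrArg N.mkQ (h.comm_add v)

theorem dual (h : IsNilpotentSolution f g i j) :
    IsNilpotentSolution f.dualMap g.dualMap (-j) (Dual.eval K V i) where
  isNilpotent_left := h.isNilpotent_left.dualMap
  isNilpotent_right := h.isNilpotent_right.dualMap
  comm_add φ := by
    ext v
    have := congrArg φ (h.comm_add v)
    simp only [map_add, map_sub, map_smul, map_zero, smul_eq_mul] at this
    simp only [LinearMap.add_apply, LinearMap.sub_apply, LinearMap.dualMap_apply,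
      LinearMap.smul_apply, LinearMap.neg_apply, Dual.eval_apply, smul_eq_mul,
      LinearMap.zero_apply]
    linear_combination -this

theorem exists_apply_eq_zero_apply_ne_zero [Nontrivial V] (h : IsNilpotentSolution f g i j)
    (hker : ∀ w, f w = 0 → g w = 0 → j w = 0 → w = 0) : ∃ v, f v = 0 ∧ j v ≠ 0 := by
  by_contra! hfj
  obtain ⟨w, hw, hfw, hgw⟩ := Module.End.exists_ne_zero_apply_eq_zero_apply_eq_zero
    h.isNilpotent_left h.isNilpotent_right fun v hfv => by
      rw [h.comm_of_apply_eq_zero (hfj v hfv), hfv, map_zero]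
  exact hw (hker w hfw hgw (hfj w hfw))

theorem exists_proper_isJointlyInvariant_or_exists_common_ker [Nontrivial V]
    (h : IsNilpotentSolution f g i j) :
    (∃ W, IsJointlyInvariant f g W ∧ i ∈ W ∧ W ≠ ⊤) ∨ ∃ w ≠ 0, f w = 0 ∧ g w = 0 ∧ j w = 0 := by
  by_contra! ⟨hsub, hker⟩
  obtain ⟨v, hfv, hjv⟩ := h.exists_apply_eq_zero_apply_ne_zero fun w hfw hgw hjw =>
    by_contra fun hw => hker w hw hfw hgw hjw
  have hi : i = f ((-(j v)⁻¹) • g v) := by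
    have := h.sub_eq v
    rw [hfv, map_zero, sub_zero] at this
    rw [map_smul, this, smul_neg, neg_smul, neg_neg, smul_smul, inv_mul_cancel₀ hjv, one_smul]
  obtain ⟨φ, hφf, hφi⟩ := h.dual.exists_apply_eq_zero_apply_ne_zero fun φ hfφ hgφ hφi => by
    have hφ : IsJointlyInvariant f g (LinearMap.ker φ) := by
      constructor <;> intro u _ <;> simp only [Submodule.mem_comap, LinearMap.mem_ker]
      · exact LinearMap.congr_fun hfφ u
      · exact LinearMap.congr_fun hgφ u
    exact LinearMap.ker_eq_top.1 (hsub _ hφ hφi)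
  exact hφi (by rw [Dual.eval_apply, hi, ← LinearMap.dualMap_apply, hφf, LinearMap.zero_apply])

theorem exists_isJointlyInvariant_mem_le_ker [FiniteDimensional K V]
    (h : IsNilpotentSolution f g i j) :
    ∃ U, IsJointlyInvariant f g U ∧ i ∈ U ∧ U ≤ LinearMap.ker j := by
  induction hn : finrank K V using Nat.strong_induction_on generalizing V with
  | _ n ih =>
  rcases subsingleton_or_nontrivial V with hV | hV
  · exact ⟨⊥, ⟨bot_le, bot_le⟩, Subsingleton.elim i 0 ▸ zero_mem _, bot_le⟩
  rcases h.exists_proper_isJointlyInvariant_or_exists_common_ker with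
    ⟨W, hW, hiW, hWtop⟩ | ⟨w, hw, hfw, hgw, hjw⟩
  · obtain ⟨U, hU, hiU, hUj⟩ := ih _ (hn ▸ Submodule.finrank_lt hWtop) (h.restrict hW hiW) rfl
    refine ⟨U.map W.subtype, hW.map_subtype hU, ⟨_, hiU, rfl⟩, ?_⟩
    rintro _ ⟨u, hu, rfl⟩
    exact hUj hu
  · have hN : IsJointlyInvariant f g (K ∙ w) := by
      constructor <;> rw [Submodule.span_singleton_le_iff_mem, Submodule.mem_comap] <;>
        simp [hfw, hgw]
    have hNj : (K ∙ w) ≤ LinearMap.ker j := by simpa using hjw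
    have hlt : finrank K (V ⧸ K ∙ w) < n := by
      have := Submodule.finrank_quotient_add_finrank (K ∙ w)
      rw [finrank_span_singleton hw] at this
      omega
    obtain ⟨U, hU, hiU, hUj⟩ := ih _ hlt (h.quotient hN hNj) rfl
    exact ⟨U.comap (K ∙ w).mkQ, hN.comap_mkQ hU, hiU, fun v hv => by simpa using hUj hv⟩

theorem exists_notMem_apply_mem (h : IsNilpotentSolution f g i j) {W : Submodule K V}
    (hW : IsJointlyInvariant f g W) (hiW : i ∈ W) (hWtop : W ≠ ⊤) :
    ∃ v ∉ W, f v ∈ W ∧ g v ∈ W := by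
  have : Nontrivial (V ⧸ W) := Submodule.Quotient.nontrivial_iff.2 hWtop
  have hcomm : ∀ x, W.mapQ W f hW.1 (W.mapQ W g hW.2 x) = W.mapQ W g hW.2 (W.mapQ W f hW.1 x) := by
    intro x
    obtain ⟨v, rfl⟩ := W.mkQ_surjective x
    simp only [Submodule.mkQ_apply, Submodule.mapQ_apply]
    rw [Submodule.Quotient.eq, h.sub_eq]
    exact W.neg_mem (W.smul_mem _ hiW)
  obtain ⟨x, hx, hfx, hgx⟩ := Module.End.exists_ne_zero_apply_eq_zero_apply_eq_zero
    (Module.End.IsNilpotent.mapQ hW.1 h.isNilpotent_left)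
    (Module.End.IsNilpotent.mapQ hW.2 h.isNilpotent_right)
    fun x hfx => by rw [hcomm, hfx, map_zero]
  obtain ⟨v, rfl⟩ := W.mkQ_surjective x
  simp only [Submodule.mkQ_apply, Submodule.mapQ_apply, Ne, Submodule.Quotient.mk_eq_zero]
    at hx hfx hgx
  exact ⟨v, hx, hfx, hgx⟩

theorem notMem_map_sup_map_cyclicSubmodule (h : IsNilpotentSolution f g i j)
    (hWj : cyclicSubmodule f g i ≤ LinearMap.ker j) (hW0 : cyclicSubmodule f g i ≠ ⊥) :
    i ∉ (cyclicSubmodule f g i).map f ⊔ (cyclicSubmodule f g i).map g := by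
  set W := cyclicSubmodule f g i
  have hW : IsJointlyInvariant f g W := isJointlyInvariant_cyclicSubmodule i
  intro hiM
  have hMW : W.map f ⊔ W.map g ≤ W :=
    sup_le (Submodule.map_le_iff_le_comap.2 hW.1) (Submodule.map_le_iff_le_comap.2 hW.2)
  have hM : IsJointlyInvariant f g (W.map f ⊔ W.map g) :=
    ⟨Submodule.map_le_iff_le_comap.1 ((Submodule.map_mono hMW).trans le_sup_left),
      Submodule.map_le_iff_le_comap.1 ((Submodule.map_mono hMW).trans le_sup_right)⟩
  exact hW.map_sup_map_ne hW0 h.isNilpotent_left h.isNilpotent_right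
    (fun w hw => h.comm_of_apply_eq_zero (hWj hw)) (le_antisymm hMW (cyclicSubmodule_le hM hiM))

theorem cyclicSubmodule_ne_dualCoannihilator (h : IsNilpotentSolution f g i j)
    (hi : cyclicSubmodule f g i ≠ ⊥) (hj : (cocyclicSubmodule f g j).dualCoannihilator ≠ ⊤) :
    cyclicSubmodule f g i ≠ (cocyclicSubmodule f g j).dualCoannihilator := by
  set W := cyclicSubmodule f g i
  intro hWN
  have hW : IsJointlyInvariant f g W := isJointlyInvariant_cyclicSubmodule i
  have hWj : W ≤ LinearMap.ker j := hWN ▸ dualCoannihilator_cocyclicSubmodule_le_ker j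
  obtain ⟨v, hvW, hfv, hgv⟩ := h.exists_notMem_apply_mem hW (mem_cyclicSubmodule_self i) (hWN ▸ hj)
  have hjv : j v ≠ 0 := by
    intro hjv
    have hU : IsJointlyInvariant f g (W ⊔ K ∙ v) := by
      constructor <;> rw [sup_le_iff, Submodule.span_singleton_le_iff_mem, Submodule.mem_comap]
      · exact ⟨hW.1.trans (Submodule.comap_mono le_sup_left), Submodule.mem_sup_left hfv⟩
      · exact ⟨hW.2.trans (Submodule.comap_mono le_sup_left), Submodule.mem_sup_left hgv⟩
    have hUj : W ⊔ K ∙ v ≤ LinearMap.ker j :=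
      sup_le hWj ((Submodule.span_singleton_le_iff_mem _ _).2 hjv)
    exact hvW (hWN ▸ le_dualCoannihilator_cocyclicSubmodule hU hUj
      (Submodule.mem_sup_right (Submodule.mem_span_singleton_self v)))
  have hi_eq : i = (j v)⁻¹ • (g (f v) - f (g v)) := by
    rw [← neg_sub, h.sub_eq, neg_neg, smul_smul, inv_mul_cancel₀ hjv, one_smul]
  have hiM : (j v)⁻¹ • (g (f v) - f (g v)) ∈ W.map f ⊔ W.map g :=
    Submodule.smul_mem _ _ (Submodule.sub_mem _ (Submodule.mem_sup_right ⟨_, hfv, rfl⟩)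
      (Submodule.mem_sup_left ⟨_, hgv, rfl⟩))
  rw [← hi_eq] at hiM
  exact h.notMem_map_sup_map_cyclicSubmodule hWj hi hiM

theorem cyclicSubmodule_le_dualCoannihilator [FiniteDimensional K V]
    (h : IsNilpotentSolution f g i j) :
    cyclicSubmodule f g i ≤ (cocyclicSubmodule f g j).dualCoannihilator := by
  obtain ⟨U, hU, hiU, hUj⟩ := h.exists_isJointlyInvariant_mem_le_ker
  exact (cyclicSubmodule_le hU hiU).trans (le_dualCoannihilator_cocyclicSubmodule hU hUj)

theorem finrank_cyclicSubmodule_add_finrank_cocyclicSubmodule_le [FiniteDimensional K V]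
    (h : IsNilpotentSolution f g i j) :
    finrank K (cyclicSubmodule f g i) + finrank K (cocyclicSubmodule f g j) ≤ finrank K V := by
  have := Subspace.finrank_add_finrank_dualCoannihilator_eq (cocyclicSubmodule f g j)
  have := Submodule.finrank_mono h.cyclicSubmodule_le_dualCoannihilator
  omega

theorem finrank_cyclicSubmodule_add_finrank_cocyclicSubmodule_lt [FiniteDimensional K V]
    (h : IsNilpotentSolution f g i j) (hi : 0 < finrank K (cyclicSubmodule f g i))
    (hj : 0 < finrank K (cocyclicSubmodule f g j)) :
    finrank K (cyclicSubmodule f g i) + finrank K (cocyclicSubmodule f g j) < finrank K V := by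
  have hsum := Subspace.finrank_add_finrank_dualCoannihilator_eq (cocyclicSubmodule f g j)
  refine h.finrank_cyclicSubmodule_add_finrank_cocyclicSubmodule_le.lt_of_ne fun heq => ?_
  refine h.cyclicSubmodule_ne_dualCoannihilator (fun h0 => hi.ne' (Submodule.finrank_eq_zero.2 h0))
    (fun htop => by rw [htop, finrank_top] at hsum; omega) ?_
  exact Submodule.eq_of_le_of_finrank_le h.cyclicSubmodule_le_dualCoannihilator (by omega)

end IsNilpotentSolution

namespace Matrix

variable {K ι : Type*} [Field K] [Fintype ι] [DecidableEq ι] (X Y : Matrix ι ι K)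

theorem toLinAlgEquiv'_freeAlgebraLift (p : FreeAlgebra K (Fin 2)) :
    toLinAlgEquiv' (FreeAlgebra.lift K ![X, Y] p) =
      FreeAlgebra.lift K ![toLinAlgEquiv' X, toLinAlgEquiv' Y] p := by
  have : (toLinAlgEquiv' : Matrix ι ι K ≃ₐ[K] _).toAlgHom.comp (FreeAlgebra.lift K ![X, Y]) =
      FreeAlgebra.lift K ![toLinAlgEquiv' X, toLinAlgEquiv' Y] := by
    ext x
    fin_cases x <;> simp
  exact AlgHom.congr_fun this p

theorem span_freeAlgebraLift_mulVec (i : ι → K) :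
    Submodule.span K
        (Set.range fun p : FreeAlgebra K (Fin 2) => FreeAlgebra.lift K ![X, Y] p *ᵥ i) =
      cyclicSubmodule (toLinAlgEquiv' X) (toLinAlgEquiv' Y) i := by
  rw [cyclicSubmodule]
  congr 2
  funext p
  exact LinearMap.congr_fun (toLinAlgEquiv'_freeAlgebraLift X Y p) i

theorem map_span_freeAlgebraLift_vecMul (j : ι → K) :
    (Submodule.span K (Set.range fun p : FreeAlgebra K (Fin 2) =>
      j ᵥ* FreeAlgebra.lift K ![X, Y] p)).map (dotProductEquiv K ι).toLinearMap =
      cocyclicSubmodule (toLinAlgEquiv' X) (toLinAlgEquiv' Y) (dotProductEquiv K ι j) := by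
  rw [Submodule.map_span, ← Set.range_comp, cocyclicSubmodule]
  congr 2
  funext p
  refine LinearMap.ext fun v => ?_
  simp [← toLinAlgEquiv'_freeAlgebraLift, dotProduct_mulVec]

theorem isNilpotentSolution_toLinAlgEquiv' {i j : ι → K} (hX : IsNilpotent X)
    (hY : IsNilpotent Y) (hc : X * Y - Y * X + vecMulVec i j = 0) :
    IsNilpotentSolution (toLinAlgEquiv' X) (toLinAlgEquiv' Y) i (dotProductEquiv K ι j) where
  isNilpotent_left := hX.map _
  isNilpotent_right := hY.map _
  comm_add v := by
    simpa [sub_mulVec, add_mulVec, mulVec_mulVec, vecMulVec_mulVec] using congrArg (· *ᵥ v) hc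

end Matrix

open Matrix

theorem stmt18_general {n : ℕ} {K : Type*} [Field K]
    (X Y : Matrix (Fin n) (Fin n) K) (i j : Fin n → K)
    (hX : IsNilpotent X) (hY : IsNilpotent Y)
    (hc : X * Y - Y * X + Matrix.vecMulVec i j = 0)
    (r s : ℕ)
    (hr : r = Module.finrank K (Submodule.span K
      (Set.range fun p : FreeAlgebra K (Fin 2) => (FreeAlgebra.lift K ![X, Y] p) *ᵥ i)))
    (hs : s = Module.finrank K (Submodule.span K
      (Set.range fun p : FreeAlgebra K (Fin 2) => j ᵥ* (FreeAlgebra.lift K ![X, Y] p)))) :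
    r + s ≤ n ∧ (0 < r → 0 < s → r + s ≤ n - 1) := by
  have h := isNilpotentSolution_toLinAlgEquiv' X Y hX hY hc
  rw [span_freeAlgebraLift_mulVec] at hr
  rw [← (dotProductEquiv K (Fin n)).finrank_map_eq, map_span_freeAlgebraLift_vecMul] at hs
  have hle := h.finrank_cyclicSubmodule_add_finrank_cocyclicSubmodule_le
  have hlt := h.finrank_cyclicSubmodule_add_finrank_cocyclicSubmodule_lt
  rw [← hr, ← hs, Module.finrank_fin_fun] at hle hlt
  exact ⟨hle, fun hr0 hs0 => by have := hlt hr0 hs0; omega⟩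

theorem stmt18 {n : ℕ} {K : Type*} [Field K]
    (hchar : ∀ p : ℕ, CharP K p → p = 0 ∨ n ≤ 2 * p)
    (X Y : Matrix (Fin n) (Fin n) K) (i j : Fin n → K)
    (hX : IsNilpotent X) (hY : IsNilpotent Y)
    (hc : X * Y - Y * X + Matrix.vecMulVec i j = 0)
    (r s : ℕ)
    (hr : r = Module.finrank K (Submodule.span K
      (Set.range fun p : FreeAlgebra K (Fin 2) => (FreeAlgebra.lift K ![X, Y] p) *ᵥ i)))
    (hs : s = Module.finrank K (Submodule.span K
      (Set.range fun p : FreeAlgebra K (Fin 2) => j ᵥ* (FreeAlgebra.lift K ![X, Y] p)))) :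
    r + s ≤ n ∧ (0 < r → 0 < s → r + s ≤ n - 1) :=
  stmt18_general X Y i j hX hY hc r s hr hs
end
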